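/- arXiv:2008.03076 — 3 statements merged into one kernel-verified Lean document; each statement's English description precedes it below -/
import Mathlib

section
/- For every t ≥ 0, the entropy H_n(t) = H_n(f_t) is differentiable in t and satisfies H'_n(t) ≤ −2 n² I_n(f_t) + a_n ∫ V f_t dν^n_ρ, where V(η) = 2 Σ_{j=1}^d Σ_{x∈T^d_n} ω_x ω_{x+e_j}. -/
open Finset

/-- The discrete torus `(ℤ/nℤ)^d`. -/
abbrev Torus (d n : ℕ) := Fin d → ZMod n

/-- Particle configurations on the discrete torus. -/
abbrev Cfg (d n : ℕ) := Torus d n → Bool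

/-- Particle configurations on `ℤ^d`. -/
abbrev ZCfg (d : ℕ) := (Fin d → ℤ) → Bool

/-- Real (0/1) value of a configuration at a site. -/
noncomputable def cval {d n : ℕ} (η : Cfg d n) (x : Torus d n) : ℝ :=
  if η x then 1 else 0

/-- Real (0/1) value of a `ℤ^d` configuration at a site. -/
noncomputable def zval {d : ℕ} (η : ZCfg d) (z : Fin d → ℤ) : ℝ :=
  if η z then 1 else 0

/-- The Bernoulli(ρ) product weight of a configuration. -/
noncomputable def bern (d n : ℕ) [NeZero n] (ρ : ℝ) (η : Cfg d n) : ℝ :=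
  ∏ x : Torus d n, (if η x then ρ else 1 - ρ)

/-- Expectation with respect to the Bernoulli(ρ) product measure `ν^n_ρ`. -/
noncomputable def expect (d n : ℕ) [NeZero n] (ρ : ℝ) (f : Cfg d n → ℝ) : ℝ :=
  ∑ η : Cfg d n, bern d n ρ η * f η

/-- A density with respect to `ν^n_ρ`. -/
def IsDensity (d n : ℕ) [NeZero n] (ρ : ℝ) (f : Cfg d n → ℝ) : Prop :=
  (∀ η, 0 ≤ f η) ∧ expect d n ρ f = 1

/-- Relative entropy `H_n(f) = ∫ f log f dν^n_ρ`. -/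
noncomputable def entropy (d n : ℕ) [NeZero n] (ρ : ℝ) (f : Cfg d n → ℝ) : ℝ :=
  expect d n ρ (fun η => f η * Real.log (f η))

/-- Sup norm of a function on the discrete torus. -/
noncomputable def supNorm {d n : ℕ} [NeZero n] (F : Torus d n → ℝ) : ℝ :=
  ⨆ x : Torus d n, |F x|

/-- The canonical unit vector `e_j` of the torus. -/
def unitT (d n : ℕ) (j : Fin d) : Torus d n := fun i => if i = j then 1 else 0

/-- The canonical unit vector `e_j` of `ℤ^d`. -/
def unitZ (d : ℕ) (j : Fin d) : Fin d → ℤ := fun i => if i = j then 1 else 0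

/-- `σ^x η` : flip the value of the configuration at `x`. -/
def flipCfg {d n : ℕ} (x : Torus d n) (η : Cfg d n) : Cfg d n :=
  Function.update η x (!η x)

/-- `σ^{x,y} η` : exchange the values of the configuration at `x` and `y`. -/
def swapCfg {d n : ℕ} (x y : Torus d n) (η : Cfg d n) : Cfg d n :=
  fun z => if z = x then η y else if z = y then η x else η z

/-- `τ_x η` : translation of a torus configuration. -/
def shiftCfg {d n : ℕ} (x : Torus d n) (η : Cfg d n) : Cfg d n := fun z => η (x + z)

/-- Canonical projection `ℤ^d → (ℤ/nℤ)^d`. -/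
def toTorus {d n : ℕ} (z : Fin d → ℤ) : Torus d n := fun i => ((z i : ℤ) : ZMod n)

/-- Periodic identification of a torus configuration with a `ℤ^d` configuration. -/
def liftCfg {d n : ℕ} (η : Cfg d n) : ZCfg d := fun z => η (toTorus z)

/-- `τ_y η` : translation of a `ℤ^d` configuration. -/
def zshift {d : ℕ} (y : Fin d → ℤ) (η : ZCfg d) : ZCfg d := fun z => η (y + z)

/-- flip the value of a `ℤ^d` configuration at `z`. -/
def zflip {d : ℕ} (z : Fin d → ℤ) (η : ZCfg d) : ZCfg d :=
  Function.update η z (!η z)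

/-- A cylinder function on `{0,1}^{ℤ^d}` : a function depending only on the
(finitely many) coordinates in `supp`. -/
structure CylFun (d : ℕ) where
  supp : Finset (Fin d → ℤ)
  toFun : ZCfg d → ℝ
  cyl : ∀ η ζ : ZCfg d, (∀ z ∈ supp, η z = ζ z) → toFun η = toFun ζ

/-- `~h(ρ)` : expectation of a cylinder function under the Bernoulli(ρ) product
measure on `{0,1}^{ℤ^d}` (computed over its support). -/
noncomputable def CylFun.tilde {d : ℕ} (h : CylFun d) (ρ : ℝ) : ℝ :=
  ∑ σ : {z // z ∈ h.supp} → Bool,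
    (∏ z : {z // z ∈ h.supp}, if σ z then ρ else 1 - ρ) *
      h.toFun (fun z => if hz : z ∈ h.supp then σ ⟨z, hz⟩ else false)

/-- `S` is contained in a cube of side `n` (so that periodic identification on the
torus of side `n` is faithful on `S`). -/
def FitsCube (d : ℕ) (S : Finset (Fin d → ℤ)) (n : ℕ) : Prop :=
  ∃ a : Fin d → ℤ, ∀ z ∈ S, ∀ i, a i ≤ z i ∧ z i < a i + (n : ℤ)

/-- `c(τ_x η)` : a cylinder function evaluated on the translate of a torus
configuration, via periodic identification. -/
noncomputable def cylAt {d n : ℕ} (c : CylFun d) (x : Torus d n) (η : Cfg d n) : ℝ :=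
  c.toFun (liftCfg (shiftCfg x η))

/-- The speed-change exclusion generator `L^S_n`. -/
noncomputable def genS (d n : ℕ) [NeZero n] (c : Fin d → CylFun d)
    (h : Cfg d n → ℝ) (η : Cfg d n) : ℝ :=
  ∑ x : Torus d n, ∑ j : Fin d,
    cylAt (c j) x η * (h (swapCfg x (x + unitT d n j) η) - h η)

/-- The voter generator `L^V_n` (the sum over the neighbours `y` of `x` being the
sum over `y = x ± e_j`, `1 ≤ j ≤ d`). -/
noncomputable def genV (d n : ℕ) [NeZero n] (h : Cfg d n → ℝ) (η : Cfg d n) : ℝ :=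
  ∑ x : Torus d n, ∑ j : Fin d,
    ((cval η (x + unitT d n j) - cval η x) ^ 2 * (h (flipCfg x η) - h η)
      + (cval η (x - unitT d n j) - cval η x) ^ 2 * (h (flipCfg x η) - h η))

/-- The adjoint in `L²(ν^n_ρ)` of a linear operator on functions on `Ω_n`. -/
noncomputable def adjoint (d n : ℕ) [NeZero n] (ρ : ℝ)
    (L : (Cfg d n → ℝ) → Cfg d n → ℝ) (g : Cfg d n → ℝ) (η : Cfg d n) : ℝ :=
  (∑ ζ : Cfg d n, bern d n ρ ζ * g ζ * L (fun ξ => if ξ = η then 1 else 0) ζ)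
    / bern d n ρ η

/-- The Dirichlet form `I_n(f)`. -/
noncomputable def dirichlet (d n : ℕ) [NeZero n] (ρ : ℝ) (c : Fin d → CylFun d)
    (f : Cfg d n → ℝ) : ℝ :=
  (1 / 2) * ∑ j : Fin d, ∑ x : Torus d n,
    expect d n ρ (fun η =>
      cylAt (c j) x η *
        (Real.sqrt (f (swapCfg x (x + unitT d n j) η)) - Real.sqrt (f η)) ^ 2)

/-- The sequence `R_d(n)`. -/
noncomputable def Rd (d n : ℕ) (a : ℝ) : ℝ :=
  if d = 1 then Real.sqrt a
  else if d = 2 then a * Real.log (n : ℝ)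
  else a * (n : ℝ) ^ (d - 2)

/-- The sequence `g_d(ℓ)`. -/
noncomputable def gd (d ℓ : ℕ) : ℝ :=
  if d = 1 then (ℓ : ℝ) else if d = 2 then Real.log (ℓ : ℝ) else 1

/-- `ω_x = (η_x - ρ)/√(ρ(1-ρ))`. -/
noncomputable def omega (d n : ℕ) [NeZero n] (ρ : ℝ) (η : Cfg d n) (x : Torus d n) : ℝ :=
  (cval η x - ρ) / Real.sqrt (ρ * (1 - ρ))

/-- `ω_{x+B} = ∏_{z ∈ B} ω_{x+z}`. -/
noncomputable def omegaProd (d n : ℕ) [NeZero n] (ρ : ℝ) (B : Finset (Fin d → ℤ))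
    (η : Cfg d n) (x : Torus d n) : ℝ :=
  ∏ z ∈ B, omega d n ρ η (x + toTorus z)

/-- `V(η) = 2 Σ_j Σ_x ω_x ω_{x+e_j}`. -/
noncomputable def Vfun (d n : ℕ) [NeZero n] (ρ : ℝ) (η : Cfg d n) : ℝ :=
  2 * ∑ j : Fin d, ∑ x : Torus d n, omega d n ρ η x * omega d n ρ η (x + unitT d n j)

/-- The cube `Λ_ℓ = {0,…,ℓ-1}^d ⊂ ℤ^d`. -/
noncomputable def box (d ℓ : ℕ) : Finset (Fin d → ℤ) :=
  Fintype.piFinset fun _ => Finset.Ico (0 : ℤ) (ℓ : ℤ)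

/-- The uniform measure `m_ℓ` on `Λ_ℓ`. -/
noncomputable def mker (d ℓ : ℕ) (z : Fin d → ℤ) : ℝ :=
  if z ∈ box d ℓ then ((ℓ : ℝ) ^ d)⁻¹ else 0

/-- The convolution `m^{(2)}_ℓ = m_ℓ ∗ m_ℓ`. -/
noncomputable def m2ker (d ℓ : ℕ) (z : Fin d → ℤ) : ℝ :=
  ∑ y ∈ box d ℓ, mker d ℓ y * mker d ℓ (z - y)

/-- `ω^ℓ_x = Σ_y m^{(2)}_ℓ(y) ω_{x+y}`. -/
noncomputable def omegaL (d n : ℕ) [NeZero n] (ρ : ℝ) (ℓ : ℕ) (η : Cfg d n)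
    (x : Torus d n) : ℝ :=
  ∑ y ∈ box d (2 * ℓ - 1), m2ker d ℓ y * omega d n ρ η (x + toTorus y)

/-- `V_ℓ(η) = 2 Σ_j Σ_x ω_x ω^ℓ_{x+e_j}`. -/
noncomputable def VfunL (d n : ℕ) [NeZero n] (ρ : ℝ) (ℓ : ℕ) (η : Cfg d n) : ℝ :=
  2 * ∑ j : Fin d, ∑ x : Torus d n, omega d n ρ η x * omegaL d n ρ ℓ η (x + unitT d n j)

/-- The ℓ¹ norm on `ℤ^d`. -/
def norm1 {d : ℕ} (z : Fin d → ℤ) : ℤ := ∑ i, |z i|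

/-- `xA` is a maximal element of `A` for the coordinatewise partial order. -/
def IsMaximalIn {d : ℕ} (A : Finset (Fin d → ℤ)) (xA : Fin d → ℤ) : Prop :=
  xA ∈ A ∧ ∀ y ∈ A, (∀ i, xA i ≤ y i) → y = xA

/-- `H^{(ℓ)}_{k,x}` built from a flow `Φ`. -/
noncomputable def Hflow (d n : ℕ) [NeZero n] (ρ : ℝ) (ℓ : ℕ)
    (Φ : (Fin d → ℤ) → (Fin d → ℤ) → ℝ) (A : Finset (Fin d → ℤ)) (xA : Fin d → ℤ)
    (G : Torus d n → ℝ) (k : Fin d) (x : Torus d n) (η : Cfg d n) : ℝ :=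
  ∑ y ∈ (box d (2 * ℓ - 1)).filter (fun y => y + unitZ d k ∈ box d (2 * ℓ - 1)),
    Φ y (y + unitZ d k) * G (x - toTorus xA - toTorus y) *
      omegaProd d n ρ (A.erase xA) η (x - toTorus xA - toTorus y)


/-!
Differentiating `H_n(f_t) = ∫ f_t log f_t dν` and moving the adjoints across gives
`H' = n² ∫ f L^S(log f + 1) dν + a ∫ f L^V(log f + 1) dν`. A jump `η ↦ Tη` contributes
`f(η) (log f(Tη) - log f(η))`, and `b log(c/b) ≤ 2√(bc) - 2b` bounds this by
`f(Tη) - f(η) - (√f(Tη) - √f(η))²`. For an exchange `σ^{x,x+e_j}`, both `ν` and the rate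
`c_j(τ_x η)` are invariant, so the linear terms cancel and the squares give `-2 I_n(f)`.
For a voter flip `σ^x` with rate `r(η) = (η_y - η_x)²` we discard the squares; changing
variables `η ↦ σ^x η` in the linear terms leaves the weight `ν(σ^x η) r(σ^x η) - ν(η) r(η)`,
which is `ν(η) ω_x ω_y` for `y ≠ x`, and summing over the bonds gives `∫ V f dν`.
-/

section Configurations

variable {d n : ℕ}

lemma swapCfg_involutive (x y : Torus d n) : Function.Involutive (swapCfg (d := d) x y) := by
  intro η
  funext z
  simp only [swapCfg]
  split_ifs <;> simp_all

lemma flipCfg_involutive (x : Torus d n) : Function.Involutive (flipCfg (d := d) x) := by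
  intro η
  funext z
  by_cases hz : z = x
  · subst hz; simp [flipCfg]
  · simp [flipCfg, Function.update_of_ne hz]

lemma toTorus_injOn_cube {a z w : Fin d → ℤ}
    (hz : ∀ i, a i ≤ z i ∧ z i < a i + n) (hw : ∀ i, a i ≤ w i ∧ w i < a i + n)
    (h : (toTorus z : Torus d n) = toTorus w) : z = w := by
  funext i
  have hdvd : (n : ℤ) ∣ w i - z i :=
    ((ZMod.intCast_eq_intCast_iff _ _ n).mp (congrFun h i)).dvd
  have hlt : |w i - z i| < n := by
    rw [abs_lt]; constructor <;> linarith [hz i, hw i]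
  linarith [Int.eq_zero_of_abs_lt_dvd hdvd hlt]

lemma toTorus_unitZ (j : Fin d) : (toTorus (unitZ d j) : Torus d n) = unitT d n j := by
  funext i
  simp only [toTorus, unitZ, unitT]
  split_ifs <;> simp

lemma CylFun.toFun_update_of_flip_invariant (C : CylFun d) {z : Fin d → ℤ}
    (hz : ∀ η, C.toFun (zflip z η) = C.toFun η) (η : ZCfg d) (b : Bool) :
    C.toFun (Function.update η z b) = C.toFun η := by
  by_cases hb : b = η z
  · rw [hb, Function.update_eq_self]
  · rw [show b = !η z by cases b <;> simp_all]
    exact hz η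

lemma cylAt_swapCfg (C : CylFun d) (j : Fin d)
    (h0 : ∀ η, C.toFun (zflip 0 η) = C.toFun η)
    (he : ∀ η, C.toFun (zflip (unitZ d j) η) = C.toFun η)
    (hfit : FitsCube d (insert 0 (insert (unitZ d j) C.supp)) n)
    (x : Torus d n) (η : Cfg d n) :
    cylAt C x (swapCfg x (x + unitT d n j) η) = cylAt C x η := by
  obtain ⟨a, hcube⟩ := hfit
  set ξ := liftCfg (shiftCfg x (swapCfg x (x + unitT d n j) η))
  set ζ := liftCfg (shiftCfg x η)
  have hagree : ∀ z ∈ C.supp,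
      Function.update (Function.update ξ 0 (ζ 0)) (unitZ d j) (ζ (unitZ d j)) z = ζ z := by
    intro z hz
    by_cases hze : z = unitZ d j
    · rw [hze, Function.update_self]
    by_cases hz0 : z = 0
    · rw [hz0, Function.update_of_ne (hz0 ▸ hze), Function.update_self]
    rw [Function.update_of_ne hze, Function.update_of_ne hz0]
    have hmem : z ∈ insert 0 (insert (unitZ d j) C.supp) := by simp [hz]
    have hx : x + toTorus z ≠ x := fun h => hz0 <| toTorus_injOn_cube (hcube z hmem)
      (hcube 0 (by simp)) (by simpa [toTorus, funext_iff] using h)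
    have hxe : x + toTorus z ≠ x + unitT d n j := fun h => hze <| toTorus_injOn_cube
      (hcube z hmem) (hcube _ (by simp)) (by rw [toTorus_unitZ]; exact add_left_cancel h)
    simp [ξ, ζ, liftCfg, shiftCfg, swapCfg, hx, hxe]
  calc cylAt C x (swapCfg x (x + unitT d n j) η) = C.toFun ξ := rfl
    _ = C.toFun (Function.update (Function.update ξ 0 (ζ 0)) (unitZ d j) (ζ (unitZ d j))) := by
      rw [C.toFun_update_of_flip_invariant he, C.toFun_update_of_flip_invariant h0]
    _ = cylAt C x η := C.cyl _ _ hagree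

end Configurations

section Bernoulli

variable {d n : ℕ} [NeZero n] {ρ : ℝ}

lemma bern_pos (hρ0 : 0 < ρ) (hρ1 : ρ < 1) (η : Cfg d n) : 0 < bern d n ρ η :=
  prod_pos fun x _ => by split <;> linarith

lemma expect_add (F G : Cfg d n → ℝ) :
    expect d n ρ (fun η => F η + G η) = expect d n ρ F + expect d n ρ G := by
  simp only [_root_.expect, mul_add, sum_add_distrib]

lemma expect_sub (F G : Cfg d n → ℝ) :
    expect d n ρ (fun η => F η - G η) = expect d n ρ F - expect d n ρ G := by
  simp only [_root_.expect, mul_sub, sum_sub_distrib]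

lemma expect_const_mul (r : ℝ) (F : Cfg d n → ℝ) :
    expect d n ρ (fun η => r * F η) = r * expect d n ρ F := by
  simp only [_root_.expect, mul_sum]
  exact sum_congr rfl fun η _ => by ring

lemma expect_sum {ι : Type*} (s : Finset ι) (F : ι → Cfg d n → ℝ) :
    expect d n ρ (fun η => ∑ i ∈ s, F i η) = ∑ i ∈ s, expect d n ρ (F i) := by
  simp only [_root_.expect, mul_sum]
  exact sum_comm

lemma expect_mono (hρ0 : 0 < ρ) (hρ1 : ρ < 1) {F G : Cfg d n → ℝ} (hFG : ∀ η, F η ≤ G η) :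
    expect d n ρ F ≤ expect d n ρ G :=
  sum_le_sum fun η _ => mul_le_mul_of_nonneg_left (hFG η) (bern_pos hρ0 hρ1 η).le

lemma bern_swapCfg (x y : Torus d n) (η : Cfg d n) :
    bern d n ρ (swapCfg x y η) = bern d n ρ η := by
  have hswap : ∀ z, swapCfg x y η z = η (Equiv.swap x y z) := fun z => by
    simp only [swapCfg, Equiv.swap_apply_def]
    split_ifs <;> rfl
  simp only [bern, hswap]
  exact Fintype.prod_equiv (Equiv.swap x y) _ _ fun z => rfl

lemma bern_flipCfg (hρ0 : 0 < ρ) (hρ1 : ρ < 1) (x : Torus d n) (η : Cfg d n) :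
    bern d n ρ (flipCfg x η) = bern d n ρ η * (if η x then (1 - ρ) / ρ else ρ / (1 - ρ)) := by
  have hflip : (fun z => if flipCfg x η z then ρ else 1 - ρ) =
      Function.update (fun z => if η z then ρ else 1 - ρ) x (if η x then 1 - ρ else ρ) := by
    funext z
    by_cases hz : z = x
    · subst hz; cases hz : η z <;> simp [flipCfg, hz]
    · simp [flipCfg, Function.update_of_ne hz]
  rw [bern, hflip, prod_update_of_mem (mem_univ x), bern,
    ← prod_erase_mul univ _ (mem_univ x), sdiff_singleton_eq_erase]
  have : 1 - ρ ≠ 0 := by linarith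
  cases η x <;> simp <;> field_simp

lemma expect_comp_swapCfg (x y : Torus d n) (F : Cfg d n → ℝ) :
    expect d n ρ (fun η => F (swapCfg x y η)) = expect d n ρ F :=
  Fintype.sum_bijective _ (swapCfg_involutive x y).bijective _ _ fun η => by
    rw [bern_swapCfg]

lemma hasDerivWithinAt_entropy {f : ℝ → Cfg d n → ℝ} {φ : Cfg d n → ℝ} {s : Set ℝ} {t : ℝ}
    (hf : ∀ η, HasDerivWithinAt (fun s => f s η) (φ η) s t) (hpos : ∀ η, 0 < f t η) :
    HasDerivWithinAt (fun s => entropy d n ρ (f s))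
      (expect d n ρ (fun η => φ η * (Real.log (f t η) + 1))) s t := by
  refine HasDerivWithinAt.fun_sum fun η _ => HasDerivWithinAt.const_mul _ ?_
  show HasDerivWithinAt (fun s => f s η * Real.log (f s η)) (φ η * (Real.log (f t η) + 1)) s t
  rw [mul_comm]
  exact (Real.hasDerivAt_mul_log (hpos η).ne').comp_hasDerivWithinAt t (hf η)

end Bernoulli

section Adjoint

variable {d n : ℕ} [NeZero n] {ρ : ℝ}

lemma expect_adjoint_mul (hρ0 : 0 < ρ) (hρ1 : ρ < 1) {L : (Cfg d n → ℝ) → Cfg d n → ℝ}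
    (hL : IsLinearMap ℝ L) (g h : Cfg d n → ℝ) :
    expect d n ρ (fun η => adjoint d n ρ L g η * h η) = expect d n ρ (fun ζ => g ζ * L h ζ) := by
  have hdecomp : ∀ ζ, L h ζ = ∑ η, h η * L (fun ξ => if ξ = η then 1 else 0) ζ := by
    intro ζ
    conv_lhs => rw [pi_eq_sum_univ h]
    change (hL.mk' L) _ ζ = _
    rw [map_sum, Finset.sum_apply]
    simp only [IsLinearMap.mk'_apply, hL.map_smul, Pi.smul_apply, smul_eq_mul, eq_comm]
  calc expect d n ρ (fun η => adjoint d n ρ L g η * h η)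
      = ∑ η, ∑ ζ, bern d n ρ ζ * g ζ * L (fun ξ => if ξ = η then 1 else 0) ζ * h η := by
        refine sum_congr rfl fun η _ => ?_
        dsimp only
        rw [_root_.adjoint, ← sum_mul]
        field_simp [(bern_pos hρ0 hρ1 η).ne']
    _ = expect d n ρ (fun ζ => g ζ * L h ζ) := by
        simp only [_root_.expect, hdecomp, mul_sum]
        rw [sum_comm]
        exact sum_congr rfl fun ζ _ => sum_congr rfl fun η _ => by ring

lemma genS_isLinearMap (c : Fin d → CylFun d) : IsLinearMap ℝ (genS d n c) where
  map_add h₁ h₂ := by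
    funext η
    simp only [genS, Pi.add_apply, ← sum_add_distrib]
    exact sum_congr rfl fun x _ => sum_congr rfl fun j _ => by ring
  map_smul r h := by
    funext η
    simp only [genS, Pi.smul_apply, smul_eq_mul, mul_sum]
    exact sum_congr rfl fun x _ => sum_congr rfl fun j _ => by ring

lemma genV_isLinearMap : IsLinearMap ℝ (genV d n) where
  map_add h₁ h₂ := by
    funext η
    simp only [genV, Pi.add_apply, ← sum_add_distrib]
    exact sum_congr rfl fun x _ => sum_congr rfl fun j _ => by ring
  map_smul r h := by
    funext η
    simp only [genV, Pi.smul_apply, smul_eq_mul, mul_sum]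
    exact sum_congr rfl fun x _ => sum_congr rfl fun j _ => by ring

end Adjoint

lemma mul_log_sub_log_le_sub_sub_sq {b c : ℝ} (hb : 0 < b) (hc : 0 < c) :
    b * (Real.log c - Real.log b) ≤ c - b - (√c - √b) ^ 2 := by
  have hb' : 0 < √b := Real.sqrt_pos.mpr hb
  have hc' : 0 < √c := Real.sqrt_pos.mpr hc
  have hlog : Real.log c - Real.log b = 2 * Real.log (√c / √b) := by
    rw [Real.log_div hc'.ne' hb'.ne', Real.log_sqrt hc.le, Real.log_sqrt hb.le]
    ring
  calc b * (Real.log c - Real.log b) = 2 * √b ^ 2 * Real.log (√c / √b) := by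
        rw [hlog, Real.sq_sqrt hb.le]; ring
    _ ≤ 2 * √b ^ 2 * (√c / √b - 1) := by
        gcongr; exact Real.log_le_sub_one_of_pos (by positivity)
    _ = c - b - (√c - √b) ^ 2 := by
        field_simp
        linear_combination Real.sq_sqrt hc.le - Real.sq_sqrt hb.le

section Exclusion

variable {d n : ℕ} [NeZero n] {ρ : ℝ}

lemma expect_mul_genS_log_le (hρ0 : 0 < ρ) (hρ1 : ρ < 1) {c : Fin d → CylFun d}
    (hc : ∀ j η, 0 ≤ (c j).toFun η)
    (hcind0 : ∀ j η, (c j).toFun (zflip 0 η) = (c j).toFun η)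
    (hcinde : ∀ j η, (c j).toFun (zflip (unitZ d j) η) = (c j).toFun η)
    (hcfit : ∀ j, FitsCube d (insert 0 (insert (unitZ d j) (c j).supp)) n)
    {f : Cfg d n → ℝ} (hf : ∀ η, 0 < f η) :
    expect d n ρ (fun η => f η * genS d n c (fun ξ => Real.log (f ξ) + 1) η)
      ≤ -2 * dirichlet d n ρ c f := by
  have hbond : ∀ x j, expect d n ρ (fun η => f η * (cylAt (c j) x η *
        (Real.log (f (swapCfg x (x + unitT d n j) η)) + 1 - (Real.log (f η) + 1))))
      ≤ -expect d n ρ (fun η => cylAt (c j) x η *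
        (√(f (swapCfg x (x + unitT d n j) η)) - √(f η)) ^ 2) := by
    intro x j
    set σ := swapCfg x (x + unitT d n j)
    have hexch : expect d n ρ (fun η => cylAt (c j) x η * f (σ η))
        = expect d n ρ (fun η => cylAt (c j) x η * f η) := by
      rw [← expect_comp_swapCfg x (x + unitT d n j)]
      simp only [σ, cylAt_swapCfg (c j) j (hcind0 j) (hcinde j) (hcfit j),
        swapCfg_involutive _ _ _]
    calc _ ≤ expect d n ρ (fun η => cylAt (c j) x η * f (σ η) - cylAt (c j) x η * f η
          - cylAt (c j) x η * (√(f (σ η)) - √(f η)) ^ 2) := by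
          refine expect_mono hρ0 hρ1 fun η => ?_
          have := mul_le_mul_of_nonneg_left
            (mul_log_sub_log_le_sub_sub_sq (hf η) (hf (σ η))) (hc j (liftCfg (shiftCfg x η)))
          rw [add_sub_add_right_eq_sub]
          simp only [cylAt] at this ⊢
          linarith
      _ = _ := by rw [expect_sub, expect_sub, hexch]; ring
  calc _ = ∑ x, ∑ j, expect d n ρ (fun η => f η * (cylAt (c j) x η *
        (Real.log (f (swapCfg x (x + unitT d n j) η)) + 1 - (Real.log (f η) + 1)))) := by
        simp only [genS, mul_sum, expect_sum]
    _ ≤ ∑ x, ∑ j, -expect d n ρ (fun η => cylAt (c j) x η *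
        (√(f (swapCfg x (x + unitT d n j) η)) - √(f η)) ^ 2) :=
        sum_le_sum fun x _ => sum_le_sum fun j _ => hbond x j
    _ = -2 * dirichlet d n ρ c f := by
        rw [dirichlet, sum_comm]
        simp only [sum_neg_distrib]
        ring

end Exclusion

section Voter

variable {d n : ℕ} [NeZero n] {ρ : ℝ}

lemma bern_flipCfg_mul_sq_le (hρ0 : 0 < ρ) (hρ1 : ρ < 1) (x y : Torus d n) (η : Cfg d n) :
    bern d n ρ (flipCfg x η) * (cval (flipCfg x η) y - cval (flipCfg x η) x) ^ 2
      ≤ bern d n ρ η * (cval η y - cval η x) ^ 2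
        + bern d n ρ η * (omega d n ρ η x * omega d n ρ η y) := by
  by_cases hxy : y = x
  · subst hxy
    simpa using mul_nonneg (bern_pos hρ0 hρ1 η).le (mul_self_nonneg (omega d n ρ η y))
  refine le_of_eq ?_
  have hP : 0 < ρ * (1 - ρ) := mul_pos hρ0 (by linarith)
  have hS : √(ρ * (1 - ρ)) * √(ρ * (1 - ρ)) = ρ * (1 - ρ) := Real.mul_self_sqrt hP.le
  have hρ' : 1 - ρ ≠ 0 := by linarith
  have hy : cval (flipCfg x η) y = cval η y := by
    simp [cval, flipCfg, Function.update_of_ne hxy]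
  have hx : flipCfg x η x = !η x := Function.update_self _ _ _
  rw [bern_flipCfg hρ0 hρ1, hy, omega, omega, cval, cval, cval, hx]
  cases η x <;> cases η y <;> simp only [Bool.not_true, Bool.not_false, Bool.false_eq_true,
    if_true, if_false] <;> rw [div_mul_div_comm, hS] <;> field_simp <;> ring

lemma expect_voter_jump_le (hρ0 : 0 < ρ) (hρ1 : ρ < 1) (x y : Torus d n) {f : Cfg d n → ℝ}
    (hf : ∀ η, 0 ≤ f η) :
    expect d n ρ (fun η => (cval η y - cval η x) ^ 2 * (f (flipCfg x η) - f η))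
      ≤ expect d n ρ (fun η => omega d n ρ η x * omega d n ρ η y * f η) := by
  have hflip : ∑ η, bern d n ρ η * ((cval η y - cval η x) ^ 2 * f (flipCfg x η))
      = ∑ η, bern d n ρ (flipCfg x η) * (cval (flipCfg x η) y - cval (flipCfg x η) x) ^ 2
        * f η :=
    Fintype.sum_bijective _ (flipCfg_involutive x).bijective _ _ fun η => by
      rw [flipCfg_involutive x η]; ring
  calc _ = ∑ η, (bern d n ρ (flipCfg x η) * (cval (flipCfg x η) y - cval (flipCfg x η) x) ^ 2
        - bern d n ρ η * (cval η y - cval η x) ^ 2) * f η := by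
        simp only [mul_sub, expect_sub]
        rw [_root_.expect, hflip, _root_.expect, ← sum_sub_distrib]
        exact sum_congr rfl fun η _ => by ring
    _ ≤ _ := sum_le_sum fun η _ => by
        have := mul_le_mul_of_nonneg_right
          (bern_flipCfg_mul_sq_le hρ0 hρ1 x y η) (hf η)
        linarith

lemma sum_omega_mul_omega_sub (j : Fin d) (η : Cfg d n) :
    ∑ x, omega d n ρ η x * omega d n ρ η (x - unitT d n j)
      = ∑ x, omega d n ρ η x * omega d n ρ η (x + unitT d n j) :=
  Fintype.sum_equiv (Equiv.subRight (unitT d n j)) _ _ fun x => by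
    simp [mul_comm]

lemma Vfun_eq_sum (η : Cfg d n) :
    Vfun d n ρ η = ∑ x, ∑ j, (omega d n ρ η x * omega d n ρ η (x + unitT d n j)
      + omega d n ρ η x * omega d n ρ η (x - unitT d n j)) := by
  rw [Vfun, mul_sum]
  conv_rhs => rw [sum_comm]
  refine sum_congr rfl fun j _ => ?_
  rw [sum_add_distrib, sum_omega_mul_omega_sub]
  ring

lemma expect_mul_genV_log_le (hρ0 : 0 < ρ) (hρ1 : ρ < 1) {f : Cfg d n → ℝ} (hf : ∀ η, 0 < f η) :
    expect d n ρ (fun η => f η * genV d n (fun ξ => Real.log (f ξ) + 1) η)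
      ≤ expect d n ρ (fun η => Vfun d n ρ η * f η) := by
  have hjump : ∀ x η, f η * (Real.log (f (flipCfg x η)) + 1 - (Real.log (f η) + 1))
      ≤ f (flipCfg x η) - f η := fun x η => by
    rw [add_sub_add_right_eq_sub]
    linarith [mul_log_sub_log_le_sub_sub_sq (hf η) (hf (flipCfg x η)),
      sq_nonneg (√(f (flipCfg x η)) - √(f η))]
  calc _ = ∑ x, ∑ j, expect d n ρ (fun η => f η *
        ((cval η (x + unitT d n j) - cval η x) ^ 2
            * (Real.log (f (flipCfg x η)) + 1 - (Real.log (f η) + 1))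
          + (cval η (x - unitT d n j) - cval η x) ^ 2
            * (Real.log (f (flipCfg x η)) + 1 - (Real.log (f η) + 1)))) := by
        simp only [genV, mul_sum, expect_sum]
    _ ≤ ∑ x, ∑ j,
        (expect d n ρ (fun η => (cval η (x + unitT d n j) - cval η x) ^ 2
            * (f (flipCfg x η) - f η))
          + expect d n ρ (fun η => (cval η (x - unitT d n j) - cval η x) ^ 2
            * (f (flipCfg x η) - f η))) :=
        sum_le_sum fun x _ => sum_le_sum fun j _ => by
          rw [← expect_add]
          refine expect_mono hρ0 hρ1 fun η => ?_
          rw [mul_add, mul_left_comm, mul_left_comm (f η)]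
          gcongr <;> exact hjump x η
    _ ≤ ∑ x, ∑ j,
        (expect d n ρ (fun η => omega d n ρ η x * omega d n ρ η (x + unitT d n j) * f η)
          + expect d n ρ (fun η => omega d n ρ η x * omega d n ρ η (x - unitT d n j) * f η)) := by
        have hf' : ∀ η, 0 ≤ f η := fun η => (hf η).le
        gcongr with x _ j _ <;> exact expect_voter_jump_le hρ0 hρ1 _ _ hf'
    _ = _ := by
        simp only [Vfun_eq_sum, sum_mul, add_mul, expect_sum, expect_add]

end Voter

theorem entropy_production_dirichlet_general
    (d n : ℕ) [NeZero n] (ρ 𝔠₀ : ℝ) (hρ0 : 0 < ρ) (hρ1 : ρ < 1)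
    (h𝔠 : 0 < 𝔠₀) (c : Fin d → CylFun d)
    (hc0 : ∀ j η, 𝔠₀ ≤ (c j).toFun η)
    (hcind0 : ∀ j η, (c j).toFun (zflip 0 η) = (c j).toFun η)
    (hcinde : ∀ j η, (c j).toFun (zflip (unitZ d j) η) = (c j).toFun η)
    (hcfit : ∀ j, FitsCube d (insert 0 (insert (unitZ d j) (c j).supp)) n)
    (a : ℝ) (ha : 0 < a)
    (f : ℝ → Cfg d n → ℝ)
    (hpos : ∀ t η, 0 ≤ t → 0 < f t η)
    (hKFE : ∀ t η, 0 ≤ t → HasDerivWithinAt (fun s => f s η)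
      ((n : ℝ) ^ 2 * adjoint d n ρ (genS d n c) (f t) η
        + a * adjoint d n ρ (genV d n) (f t) η) (Set.Ici 0) t)
    (t : ℝ) (ht : 0 ≤ t) :
    ∃ D : ℝ, HasDerivWithinAt (fun s => entropy d n ρ (f s)) D (Set.Ici 0) t ∧
      D ≤ -2 * (n : ℝ) ^ 2 * dirichlet d n ρ c (f t)
          + a * expect d n ρ (fun η => Vfun d n ρ η * f t η) := by
  have hft : ∀ η, 0 < f t η := fun η => hpos t η ht
  refine ⟨_, hasDerivWithinAt_entropy (fun η => hKFE t η ht) hft, ?_⟩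
  have hS := expect_mul_genS_log_le hρ0 hρ1 (fun j η => h𝔠.le.trans (hc0 j η))
    hcind0 hcinde hcfit hft
  have hV := expect_mul_genV_log_le hρ0 hρ1 hft
  simp only [add_mul, mul_assoc, expect_add, expect_const_mul]
  rw [expect_adjoint_mul hρ0 hρ1 (genS_isLinearMap c),
    expect_adjoint_mul hρ0 hρ1 genV_isLinearMap]
  linarith [mul_le_mul_of_nonneg_left hS (sq_nonneg (n : ℝ)),
    mul_le_mul_of_nonneg_left hV ha.le]

/-- `H'_n(t) ≤ -2 n² I_n(f_t) + a_n ∫ V f_t dν^n_ρ`. -/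
theorem entropy_production_dirichlet
    (d n : ℕ) [NeZero n] (hd : 1 ≤ d) (ρ 𝔠₀ : ℝ) (hρ0 : 0 < ρ) (hρ1 : ρ < 1)
    (h𝔠 : 0 < 𝔠₀) (c : Fin d → CylFun d)
    (hc0 : ∀ j η, 𝔠₀ ≤ (c j).toFun η)
    (hcind0 : ∀ j η, (c j).toFun (zflip 0 η) = (c j).toFun η)
    (hcinde : ∀ j η, (c j).toFun (zflip (unitZ d j) η) = (c j).toFun η)
    (hcfit : ∀ j, FitsCube d (insert 0 (insert (unitZ d j) (c j).supp)) n)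
    (a : ℝ) (ha : 0 < a)
    (f : ℝ → Cfg d n → ℝ)
    (hdens : ∀ t, 0 ≤ t → IsDensity d n ρ (f t))
    (hpos : ∀ t η, 0 ≤ t → 0 < f t η)
    (hKFE : ∀ t η, 0 ≤ t → HasDerivWithinAt (fun s => f s η)
      ((n : ℝ) ^ 2 * adjoint d n ρ (genS d n c) (f t) η
        + a * adjoint d n ρ (genV d n) (f t) η) (Set.Ici 0) t)
    (t : ℝ) (ht : 0 ≤ t) :
    ∃ D : ℝ, HasDerivWithinAt (fun s => entropy d n ρ (f s)) D (Set.Ici 0) t ∧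
      D ≤ -2 * (n : ℝ) ^ 2 * dirichlet d n ρ c (f t)
          + a * expect d n ρ (fun η => Vfun d n ρ η * f t η) :=
  entropy_production_dirichlet_general d n ρ 𝔠₀ hρ0 hρ1 h𝔠 c hc0 hcind0 hcinde hcfit a ha f hpos
    hKFE t ht
end

section
/- There exists a finite constant C_d, depending only on the dimension d, such that for every integer ℓ ≥ 1 there is a flow Φ_ℓ connecting the Dirac measure at the origin to the measure m^{(2)}_ℓ which is supported on nearest-neighbour bonds inside Λ_{2ℓ−1}, i.e. Φ_ℓ(x,y) = 0 whenever ‖y − x‖_1 ≠ 1 or {x,y} ⊄ Λ_{2ℓ−1}, and which satisfies Σ_{j=1}^d Σ_{x∈ℤ^d} Φ_ℓ(x, x+e_j)² ≤ C_d g_d(ℓ). -/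
/-!
Write `δ₀ - m^{(2)}_ℓ` as the telescoping sum of the differences `μ_k - μ_{k+1}`, where
`μ_k = m_{2^k}` for `k ≤ K = ⌊log₂ ℓ⌋` and `μ_{K+1} = m^{(2)}_ℓ` (in dimension one, `K = 0`).
Each difference has zero mass on a box of side `L ≤ 2^{k+2}`, and is transported inside that box
by equalizing one coordinate after the other; this flow is bounded by
`2 L ‖μ_k - μ_{k+1}‖_∞ ≤ 8 · 2^{-(d-1)k}` and lives on at most `2^{(k+2)d}` sites. Bounding the
cross term of the scales `k ≤ k'` by the `ℓ¹` norm at scale `k` times the sup norm at scale `k'`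
gives an energy `O(Σ_{k ≤ K} 2^{-(d-2)k})`: `O(1)` for `d ≥ 3` and `O(log ℓ)` for `d = 2`.
In dimension one the single flow is bounded by `2 ‖δ₀ - m^{(2)}_ℓ‖₁ = 4` on `2ℓ - 1` sites.
-/

open Finset

section Kernels

variable {d : ℕ}

lemma mem_box {L : ℕ} {x : Fin d → ℤ} : x ∈ box d L ↔ ∀ i, 0 ≤ x i ∧ x i < L := by
  simp [_root_.box, Fintype.mem_piFinset]

lemma box_mono {L L' : ℕ} (h : L ≤ L') : box d L ⊆ box d L' := fun x hx =>
  mem_box.2 fun i => ⟨(mem_box.1 hx i).1, (mem_box.1 hx i).2.trans_le (by exact_mod_cast h)⟩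

lemma card_box (L : ℕ) : #(box d L) = L ^ d := by
  simp [_root_.box, Fintype.card_piFinset]

lemma box_one : box d 1 = {0} := by
  ext x
  simp only [mem_box, mem_singleton, funext_iff, Pi.zero_apply, Nat.cast_one]
  exact forall_congr' fun i => by omega

lemma add_mem_box {ℓ : ℕ} {y w : Fin d → ℤ} (hy : y ∈ box d ℓ) (hw : w ∈ box d ℓ) :
    y + w ∈ box d (2 * ℓ - 1) := by
  rw [mem_box] at *
  intro i
  have := hy i
  have := hw i
  simp only [Pi.add_apply]
  omega

lemma mker_nonneg (L : ℕ) (z : Fin d → ℤ) : 0 ≤ mker d L z := by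
  unfold mker; split <;> positivity

lemma mker_le (L : ℕ) (z : Fin d → ℤ) : mker d L z ≤ ((L : ℝ) ^ d)⁻¹ := by
  unfold mker; split
  · exact le_rfl
  · positivity

lemma mker_eq_zero {L : ℕ} {z : Fin d → ℤ} (h : z ∉ box d L) : mker d L z = 0 := by
  simp [mker, h]

lemma mker_one (z : Fin d → ℤ) : mker d 1 z = if z = 0 then 1 else 0 := by
  simp [mker, box_one]

lemma sum_mker {L : ℕ} (hL : 1 ≤ L) {S : Finset (Fin d → ℤ)} (h : box d L ⊆ S) :
    ∑ z ∈ S, mker d L z = 1 := by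
  rw [← sum_subset h fun z _ hz => mker_eq_zero hz]
  have hconst : ∀ z ∈ box d L, mker d L z = ((L : ℝ) ^ d)⁻¹ := fun z hz => if_pos hz
  rw [sum_congr rfl hconst, sum_const, card_box, nsmul_eq_mul]
  push_cast
  exact mul_inv_cancel₀ (by positivity)

lemma m2ker_nonneg (ℓ : ℕ) (z : Fin d → ℤ) : 0 ≤ m2ker d ℓ z :=
  sum_nonneg fun y _ => mul_nonneg (mker_nonneg ℓ y) (mker_nonneg ℓ _)

lemma m2ker_le {ℓ : ℕ} (hℓ : 1 ≤ ℓ) (z : Fin d → ℤ) : m2ker d ℓ z ≤ ((ℓ : ℝ) ^ d)⁻¹ :=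
  calc m2ker d ℓ z ≤ ∑ y ∈ box d ℓ, mker d ℓ y * ((ℓ : ℝ) ^ d)⁻¹ :=
        sum_le_sum fun y _ => mul_le_mul_of_nonneg_left (mker_le ℓ _) (mker_nonneg ℓ y)
    _ = ((ℓ : ℝ) ^ d)⁻¹ := by rw [← sum_mul, sum_mker hℓ subset_rfl, one_mul]

lemma m2ker_eq_zero {ℓ : ℕ} {z : Fin d → ℤ} (h : z ∉ box d (2 * ℓ - 1)) : m2ker d ℓ z = 0 := by
  refine sum_eq_zero fun y hy => ?_
  have : z - y ∉ box d ℓ := fun hzy => h (by simpa using add_mem_box hy hzy)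
  rw [mker_eq_zero this, mul_zero]

lemma sum_m2ker {ℓ : ℕ} (hℓ : 1 ≤ ℓ) : ∑ z ∈ box d (2 * ℓ - 1), m2ker d ℓ z = 1 := by
  have translate : ∀ y ∈ box d ℓ, ∑ z ∈ box d (2 * ℓ - 1), mker d ℓ (z - y) = 1 := by
    intro y hy
    refine (sum_map _ (addRightEmbedding (-y)) (mker d ℓ)).symm.trans ?_
    exact sum_mker hℓ fun w hw => mem_map.2 ⟨w + y, add_mem_box hw hy, by simp⟩
  unfold m2ker
  rw [sum_comm, ← sum_mker hℓ (subset_refl (box d ℓ))]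
  refine sum_congr rfl fun y hy => ?_
  rw [← mul_sum, translate y hy, mul_one]

lemma m2ker_one : m2ker d 1 = mker d 1 := by
  funext z
  simp [m2ker, box_one, mker_one]

end Kernels

section Bonds

variable {d : ℕ}

lemma unitZ_apply (j i : Fin d) : unitZ d j i = if i = j then 1 else 0 := rfl

lemma unitZ_injective : Function.Injective (unitZ d) := fun i j h => by
  simpa [unitZ_apply] using congrFun h i

lemma add_unitZ_apply_self (x : Fin d → ℤ) (j : Fin d) : (x + unitZ d j) j = x j + 1 := by
  simp [unitZ_apply]

lemma sub_unitZ_apply_self (x : Fin d → ℤ) (j : Fin d) : (x - unitZ d j) j = x j - 1 := by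
  simp [unitZ_apply]

lemma add_unitZ_apply_of_ne (x : Fin d → ℤ) {i j : Fin d} (h : i ≠ j) :
    (x + unitZ d j) i = x i := by
  simp [unitZ_apply, h]

lemma sub_unitZ_apply_of_ne (x : Fin d → ℤ) {i j : Fin d} (h : i ≠ j) :
    (x - unitZ d j) i = x i := by
  simp [unitZ_apply, h]

lemma norm1_unitZ (j : Fin d) : norm1 (unitZ d j) = 1 := by
  simp [norm1, unitZ_apply, apply_ite]

noncomputable def bondFlow (φ : Fin d → (Fin d → ℤ) → ℝ) (x y : Fin d → ℤ) : ℝ :=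
  ∑ j, ((if y = x + unitZ d j then φ j x else 0) - if x = y + unitZ d j then φ j y else 0)

variable (φ : Fin d → (Fin d → ℤ) → ℝ)

lemma bondFlow_antisymm (x y : Fin d → ℤ) : bondFlow φ x y = -bondFlow φ y x := by
  simp only [bondFlow, ← sum_neg_distrib, neg_sub]

lemma bondFlow_add_unitZ (x : Fin d → ℤ) (j : Fin d) : bondFlow φ x (x + unitZ d j) = φ j x := by
  have hx : ∀ i, x ≠ x + unitZ d j + unitZ d i := fun i h => by
    have := congrFun h i
    simp only [Pi.add_apply, unitZ_apply] at this
    split_ifs at this <;> omega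
  simp [bondFlow, hx, unitZ_injective.eq_iff]

lemma bondFlow_sub_unitZ (x : Fin d → ℤ) (j : Fin d) :
    bondFlow φ x (x - unitZ d j) = -φ j (x - unitZ d j) := by
  rw [bondFlow_antisymm, ← bondFlow_add_unitZ φ (x - unitZ d j) j, sub_add_cancel]

lemma bondFlow_eq_zero {S : Finset (Fin d → ℤ)}
    (hφ : ∀ j x, φ j x ≠ 0 → x ∈ S ∧ x + unitZ d j ∈ S) {x y : Fin d → ℤ}
    (h : norm1 (y - x) ≠ 1 ∨ x ∉ S ∨ y ∉ S) : bondFlow φ x y = 0 := by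
  refine sum_eq_zero fun j _ => ?_
  have vanish : ∀ z, (z ∉ S ∨ z + unitZ d j ∉ S) → φ j z = 0 := fun z hz =>
    by_contra fun hne => by have := hφ j z hne; tauto
  have norm1_neg : norm1 (-unitZ d j) = 1 := by
    rw [← norm1_unitZ j]; simp [norm1]
  split_ifs with hy hx hx
  · rw [hy] at hx
    have := congrFun hx j
    rw [add_unitZ_apply_self, add_unitZ_apply_self] at this
    omega
  · subst hy
    simp only [add_sub_cancel_left, norm1_unitZ, ne_eq, not_true_eq_false, false_or] at h
    rw [vanish x h, sub_zero]
  · subst hx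
    simp only [sub_add_cancel_left, norm1_neg, ne_eq, not_true_eq_false, false_or] at h
    rw [vanish y h.symm, sub_zero]
  · exact sub_zero 0

end Bonds

section BoxFlow

variable {d : ℕ} (L : ℕ) (f : (Fin d → ℤ) → ℝ)

noncomputable def fiber (t : ℕ) (x : Fin d → ℤ) : Finset (Fin d → ℤ) :=
  (box d L).filter fun y => ∀ i : Fin d, t ≤ i.val → y i = x i

noncomputable def lowerFiber (j : Fin d) (x : Fin d → ℤ) : Finset (Fin d → ℤ) :=
  (fiber L (j.val + 1) x).filter fun y => y j ≤ x j

/-- Once the first `j` coordinates have been equalized, the mass at `x` is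
`L⁻¹ ^ j * ∑ y ∈ fiber L j x, f y`; spreading it uniformly along the `j`-th coordinate line
pushes the cumulative excess of the sites `y j ≤ x j` across the bond `(x, x + e_j)`. -/
noncomputable def equalizingFlux (j : Fin d) (x : Fin d → ℤ) : ℝ :=
  (L : ℝ)⁻¹ ^ j.val * (∑ y ∈ lowerFiber L j x, f y
    - ((x j + 1 : ℤ) : ℝ) / L * ∑ y ∈ fiber L (j.val + 1) x, f y)

noncomputable def boxFlow (j : Fin d) (x : Fin d → ℤ) : ℝ :=
  if x ∈ box d L then equalizingFlux L f j x else 0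

variable {L}

lemma boxFlow_zero (j : Fin d) (x : Fin d → ℤ) : boxFlow L 0 j x = 0 := by
  simp [boxFlow, equalizingFlux]

lemma fiber_sub_unitZ (j : Fin d) (x : Fin d → ℤ) :
    fiber L (j.val + 1) (x - unitZ d j) = fiber L (j.val + 1) x := by
  refine filter_congr fun y _ => forall_congr' fun i => imp_congr_right fun hi => ?_
  have hij : i ≠ j := fun h => by subst h; omega
  rw [sub_unitZ_apply_of_ne x hij]

lemma filter_lowerFiber_eq (j : Fin d) (x : Fin d → ℤ) :
    (lowerFiber L j x).filter (fun y => y j = x j) = fiber L j.val x := by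
  ext y
  simp only [lowerFiber, fiber, mem_filter]
  constructor
  · rintro ⟨⟨⟨hy, hfix⟩, -⟩, hyj⟩
    refine ⟨hy, fun i hi => ?_⟩
    rcases hi.eq_or_lt with hi | hi
    · rwa [Fin.ext hi.symm]
    · exact hfix i hi
  · rintro ⟨hy, hfix⟩
    exact ⟨⟨⟨hy, fun i hi => hfix i (by omega)⟩, (hfix j le_rfl).le⟩, hfix j le_rfl⟩

lemma filter_not_lowerFiber_eq (j : Fin d) (x : Fin d → ℤ) :
    (lowerFiber L j x).filter (fun y => ¬ y j = x j) = lowerFiber L j (x - unitZ d j) := by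
  ext y
  simp only [lowerFiber, fiber_sub_unitZ, mem_filter, sub_unitZ_apply_self]
  rw [and_assoc]
  exact and_congr_right fun _ => by omega

lemma sum_lowerFiber (j : Fin d) (x : Fin d → ℤ) :
    ∑ y ∈ lowerFiber L j x, f y
      = ∑ y ∈ lowerFiber L j (x - unitZ d j), f y + ∑ y ∈ fiber L j.val x, f y := by
  rw [← sum_filter_not_add_sum_filter _ (fun y => y j = x j), filter_lowerFiber_eq,
    filter_not_lowerFiber_eq]

lemma equalizingFlux_sub_unitZ (j : Fin d) (x : Fin d → ℤ) :
    equalizingFlux L f j x - equalizingFlux L f j (x - unitZ d j)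
      = (L : ℝ)⁻¹ ^ j.val * ∑ y ∈ fiber L j.val x, f y
        - (L : ℝ)⁻¹ ^ (j.val + 1) * ∑ y ∈ fiber L (j.val + 1) x, f y := by
  simp only [equalizingFlux, sum_lowerFiber f j x, fiber_sub_unitZ, sub_unitZ_apply_self]
  push_cast
  ring

lemma equalizingFlux_of_eq_neg_one {j : Fin d} {x : Fin d → ℤ} (hx : x j = -1) :
    equalizingFlux L f j x = 0 := by
  have : lowerFiber L j x = ∅ := filter_false_of_mem fun y hy => by
    have := (mem_box.1 (mem_filter.1 hy).1 j).1
    omega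
  simp [equalizingFlux, this, hx]

lemma equalizingFlux_of_add_one_eq {j : Fin d} {x : Fin d → ℤ} (hL : L ≠ 0)
    (hx : x j + 1 = L) : equalizingFlux L f j x = 0 := by
  have : lowerFiber L j x = fiber L (j.val + 1) x := filter_true_of_mem fun y hy => by
    have := (mem_box.1 (mem_filter.1 hy).1 j).2
    omega
  simp [equalizingFlux, this, hx, hL]

lemma boxFlow_ne_zero {j : Fin d} {x : Fin d → ℤ} (h : boxFlow L f j x ≠ 0) :
    x ∈ box d L ∧ x + unitZ d j ∈ box d L := by
  by_cases hx : x ∈ box d L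
  · refine ⟨hx, mem_box.2 fun i => ?_⟩
    have hxi := mem_box.1 hx i
    by_cases hij : i = j
    · subst hij
      have hL : L ≠ 0 := by have := hxi.1.trans_lt hxi.2; omega
      have : x i + 1 ≠ L := fun he => h (by
        rw [boxFlow, if_pos hx, equalizingFlux_of_add_one_eq f hL he])
      rw [add_unitZ_apply_self]
      omega
    · rwa [add_unitZ_apply_of_ne x hij]
  · exact absurd (if_neg hx) h

lemma boxFlow_sub_unitZ_of_mem {x : Fin d → ℤ} (hx : x ∈ box d L) (j : Fin d) :
    boxFlow L f j (x - unitZ d j) = equalizingFlux L f j (x - unitZ d j) := by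
  by_cases hx' : x - unitZ d j ∈ box d L
  · rw [boxFlow, if_pos hx']
  · have hxj : x j = 0 := by
      by_contra hne
      refine hx' (mem_box.2 fun i => ?_)
      have := mem_box.1 hx i
      by_cases hij : i = j
      · subst hij
        rw [sub_unitZ_apply_self]
        omega
      · rwa [sub_unitZ_apply_of_ne x hij]
    rw [boxFlow, if_neg hx', equalizingFlux_of_eq_neg_one f (by rw [sub_unitZ_apply_self, hxj]; rfl)]

lemma sum_fiber_zero {x : Fin d → ℤ} (hx : x ∈ box d L) : ∑ y ∈ fiber L 0 x, f y = f x := by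
  have : fiber L 0 x = {x} := by
    ext y
    simp only [fiber, mem_filter, mem_singleton]
    constructor
    · exact fun h => funext fun i => h.2 i (Nat.zero_le _)
    · rintro rfl
      exact ⟨hx, fun _ _ => rfl⟩
  rw [this, sum_singleton]

lemma fiber_dim (x : Fin d → ℤ) : fiber L d x = box d L :=
  filter_true_of_mem fun _ _ i hi => absurd i.isLt (by omega)

theorem boxFlow_div (hf : ∀ y ∉ box d L, f y = 0) (hsum : ∑ y ∈ box d L, f y = 0)
    (x : Fin d → ℤ) :
    ∑ j : Fin d, (boxFlow L f j x - boxFlow L f j (x - unitZ d j)) = f x := by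
  by_cases hx : x ∈ box d L
  · rw [sum_congr rfl fun j _ => by
      rw [boxFlow_sub_unitZ_of_mem f hx, boxFlow, if_pos hx, equalizingFlux_sub_unitZ]]
    rw [Fin.sum_univ_eq_sum_range (fun t => (L : ℝ)⁻¹ ^ t * ∑ y ∈ fiber L t x, f y
      - (L : ℝ)⁻¹ ^ (t + 1) * ∑ y ∈ fiber L (t + 1) x, f y), sum_range_sub',
      sum_fiber_zero f hx, fiber_dim, hsum, mul_zero, sub_zero, pow_zero, one_mul]
  · have hout : ∀ j : Fin d, boxFlow L f j (x - unitZ d j) = 0 := fun j => by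
      by_contra h
      exact hx (by simpa using (boxFlow_ne_zero f h).2)
    have hin : ∀ j : Fin d, boxFlow L f j x = 0 := fun j => if_neg hx
    simp [hin, hout, hf x hx]

lemma card_fiber_le {t : ℕ} (ht : t ≤ d) (x : Fin d → ℤ) : #(fiber L t x) ≤ L ^ t := by
  let restrict : (Fin d → ℤ) → Fin t → ℤ := fun y i => y (Fin.castLE ht i)
  calc #(fiber L t x) ≤ #(Fintype.piFinset fun _ : Fin t => Ico (0 : ℤ) L) := by
        refine card_le_card_of_injOn restrict (fun y hy => ?_) fun y hy y' hy' h => ?_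
        · rw [mem_coe, fiber, mem_filter, mem_box] at hy
          simpa [restrict] using fun i => hy.1 (Fin.castLE ht i)
        · rw [mem_coe, fiber, mem_filter] at hy hy'
          funext i
          by_cases hi : t ≤ i.val
          · rw [hy.2 i hi, hy'.2 i hi]
          · exact congrFun h ⟨i.val, by omega⟩
    _ = L ^ t := by simp [Fintype.card_piFinset]

lemma abs_boxFlow_le (j : Fin d) (x : Fin d → ℤ) :
    |boxFlow L f j x| ≤ 2 * (L : ℝ)⁻¹ ^ j.val * ∑ y ∈ fiber L (j.val + 1) x, |f y| := by
  unfold boxFlow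
  split_ifs with hx
  · have hxj := mem_box.1 hx j
    have hslope : |((x j + 1 : ℤ) : ℝ) / L| ≤ 1 := by
      rw [abs_div, Nat.abs_cast, div_le_one (by exact_mod_cast (by omega : (0 : ℤ) < L))]
      exact_mod_cast (abs_le.2 ⟨by omega, by omega⟩ : |x j + 1| ≤ L)
    have hA : |∑ y ∈ lowerFiber L j x, f y| ≤ ∑ y ∈ fiber L (j.val + 1) x, |f y| :=
      (abs_sum_le_sum_abs _ _).trans
        (sum_le_sum_of_subset_of_nonneg (filter_subset _ _) fun _ _ _ => abs_nonneg _)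
    have hQ : |∑ y ∈ fiber L (j.val + 1) x, f y| ≤ ∑ y ∈ fiber L (j.val + 1) x, |f y| :=
      abs_sum_le_sum_abs _ _
    rw [equalizingFlux, abs_mul, abs_of_nonneg (by positivity)]
    calc _ ≤ (L : ℝ)⁻¹ ^ j.val * (∑ y ∈ fiber L (j.val + 1) x, |f y|
          + 1 * ∑ y ∈ fiber L (j.val + 1) x, |f y|) := by
          refine mul_le_mul_of_nonneg_left ((abs_sub _ _).trans (add_le_add hA ?_)) (by positivity)
          rw [abs_mul]
          exact mul_le_mul hslope hQ (abs_nonneg _) zero_le_one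
      _ = _ := by ring
  · rw [abs_zero]; positivity

lemma abs_boxFlow_le_sum_abs (hL : 1 ≤ L) (j : Fin d) (x : Fin d → ℤ) :
    |boxFlow L f j x| ≤ 2 * ∑ y ∈ box d L, |f y| := by
  have hpow : (L : ℝ)⁻¹ ^ j.val ≤ 1 :=
    pow_le_one₀ (by positivity) (inv_le_one_of_one_le₀ (by exact_mod_cast hL))
  have hfiber : ∑ y ∈ fiber L (j.val + 1) x, |f y| ≤ ∑ y ∈ box d L, |f y| :=
    sum_le_sum_of_subset_of_nonneg (filter_subset _ _) fun _ _ _ => abs_nonneg _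
  calc _ ≤ 2 * (L : ℝ)⁻¹ ^ j.val * ∑ y ∈ fiber L (j.val + 1) x, |f y| := abs_boxFlow_le f j x
    _ ≤ 2 * 1 * ∑ y ∈ box d L, |f y| := by gcongr
    _ = _ := by ring

lemma abs_boxFlow_le_mul {ε : ℝ} (hf : ∀ y, |f y| ≤ ε) (j : Fin d) (x : Fin d → ℤ) :
    |boxFlow L f j x| ≤ 2 * ε * L := by
  have hε : 0 ≤ ε := (abs_nonneg _).trans (hf x)
  have hfiber : ∑ y ∈ fiber L (j.val + 1) x, |f y| ≤ (L : ℝ) ^ (j.val + 1) * ε :=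
    calc _ ≤ ∑ y ∈ fiber L (j.val + 1) x, ε := sum_le_sum fun y _ => hf y
      _ = #(fiber L (j.val + 1) x) * ε := by rw [sum_const, nsmul_eq_mul]
      _ ≤ _ := by gcongr; exact_mod_cast card_fiber_le j.isLt x
  have hpow : (L : ℝ)⁻¹ ^ j.val * (L : ℝ) ^ (j.val + 1) = L := by
    rcases eq_or_ne (L : ℝ) 0 with h | h
    · simp [h]
    · rw [pow_succ, ← mul_assoc, ← mul_pow, inv_mul_cancel₀ h, one_pow, one_mul]
  calc _ ≤ 2 * (L : ℝ)⁻¹ ^ j.val * ∑ y ∈ fiber L (j.val + 1) x, |f y| := abs_boxFlow_le f j x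
    _ ≤ 2 * (L : ℝ)⁻¹ ^ j.val * ((L : ℝ) ^ (j.val + 1) * ε) := by gcongr
    _ = 2 * ε * ((L : ℝ)⁻¹ ^ j.val * (L : ℝ) ^ (j.val + 1)) := by ring
    _ = 2 * ε * L := by rw [hpow]

end BoxFlow

section ScaleSums

lemma sq_sum_le_two_mul_sum_mul_sum_Ico (b : ℕ → ℝ) (n : ℕ) :
    (∑ k ∈ range n, b k) ^ 2 ≤ 2 * ∑ k ∈ range n, b k * ∑ k' ∈ Ico k n, b k' := by
  induction n with
  | zero => simp
  | succ n ih =>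
    have tail : ∀ k ∈ range n, ∑ k' ∈ Ico k (n + 1), b k' = ∑ k' ∈ Ico k n, b k' + b n :=
      fun k hk => sum_Ico_succ_top (mem_range.1 hk).le b
    rw [sum_range_succ, sum_range_succ, Nat.Ico_succ_singleton, sum_singleton,
      sum_congr rfl fun k hk => congrArg (b k * ·) (tail k hk)]
    simp only [mul_add, sum_add_distrib, ← sum_mul]
    nlinarith [sq_nonneg (b n)]

lemma sum_sq_sum_le {α : Type*} (S : Finset α) (s : ℕ → α → ℝ) (n : ℕ) (a M : ℕ → ℝ)
    (ha0 : ∀ k, 0 ≤ a k) (ha : ∀ k < n, ∀ x, |s k x| ≤ a k)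
    (hM : ∀ k < n, ∑ x ∈ S, |s k x| ≤ M k) :
    ∑ x ∈ S, (∑ k ∈ range n, s k x) ^ 2 ≤ 2 * ∑ k ∈ range n, M k * ∑ k' ∈ Ico k n, a k' := by
  have pointwise : ∀ x, (∑ k ∈ range n, s k x) ^ 2
      ≤ 2 * ∑ k ∈ range n, |s k x| * ∑ k' ∈ Ico k n, a k' := fun x =>
    calc (∑ k ∈ range n, s k x) ^ 2 ≤ (∑ k ∈ range n, |s k x|) ^ 2 := by
          rw [← sq_abs]; gcongr; exact abs_sum_le_sum_abs _ _
      _ ≤ 2 * ∑ k ∈ range n, |s k x| * ∑ k' ∈ Ico k n, |s k' x| :=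
          sq_sum_le_two_mul_sum_mul_sum_Ico _ n
      _ ≤ _ := by
          gcongr with k hk k' hk'
          exact ha k' (mem_Ico.1 hk').2 x
  calc _ ≤ ∑ x ∈ S, 2 * ∑ k ∈ range n, |s k x| * ∑ k' ∈ Ico k n, a k' :=
        sum_le_sum fun x _ => pointwise x
    _ = 2 * ∑ k ∈ range n, (∑ x ∈ S, |s k x|) * ∑ k' ∈ Ico k n, a k' := by
        rw [← mul_sum, sum_comm]; simp only [sum_mul]
    _ ≤ _ := by
        gcongr with k hk
        · exact sum_nonneg fun _ _ => ha0 _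
        · exact hM k (mem_range.1 hk)

lemma inv_two_pow_le_half {n : ℕ} (hn : 1 ≤ n) : ((2 : ℝ) ^ n)⁻¹ ≤ 1 / 2 := by
  rw [one_div]
  exact inv_anti₀ two_pos (le_self_pow₀ one_le_two (by omega))

lemma sum_Ico_geom_le {r : ℝ} (hr0 : 0 ≤ r) (hr : r ≤ 1 / 2) (k n : ℕ) :
    ∑ k' ∈ Ico k n, r ^ k' ≤ 2 * r ^ k :=
  calc _ ≤ r ^ k / (1 - r) := geom_sum_Ico_le_of_lt_one hr0 (by linarith)
    _ ≤ _ := by rw [div_le_iff₀ (by linarith)]; nlinarith [pow_nonneg hr0 k]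

end ScaleSums

section Multiscale

noncomputable def scaleMeasure (d ℓ K k : ℕ) : (Fin d → ℤ) → ℝ :=
  if k ≤ K then mker d (2 ^ k) else m2ker d ℓ

def scaleSide (ℓ K k : ℕ) : ℕ := if k < K then 2 ^ (k + 1) else 2 * ℓ - 1

noncomputable def scaleStep (d ℓ K k : ℕ) : (Fin d → ℤ) → ℝ :=
  scaleMeasure d ℓ K k - scaleMeasure d ℓ K (k + 1)

noncomputable def scaleFlow (d ℓ K k : ℕ) : Fin d → (Fin d → ℤ) → ℝ :=
  boxFlow (scaleSide ℓ K k) (scaleStep d ℓ K k)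

noncomputable def multiscaleFlow (d ℓ K : ℕ) (j : Fin d) (x : Fin d → ℤ) : ℝ :=
  ∑ k ∈ range (K + 1), scaleFlow d ℓ K k j x

variable {d ℓ K k : ℕ}

lemma scaleMeasure_of_le (hk : k ≤ K) : scaleMeasure d ℓ K k = mker d (2 ^ k) := if_pos hk

lemma scaleMeasure_succ_self : scaleMeasure d ℓ K (K + 1) = m2ker d ℓ :=
  if_neg K.lt_succ_self.not_ge

lemma scaleSide_le (hK : 2 ^ K ≤ ℓ) : scaleSide ℓ K k ≤ 2 * ℓ - 1 := by
  unfold scaleSide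
  split_ifs with h
  · have := Nat.pow_le_pow_right two_pos (h : k + 1 ≤ K)
    omega
  · exact le_rfl

lemma pow_le_scaleSide (hK : 2 ^ K ≤ ℓ) (hk : k ≤ K) : 2 ^ k ≤ scaleSide ℓ K k := by
  unfold scaleSide
  split_ifs with h
  · exact Nat.pow_le_pow_right two_pos k.le_succ
  · have := Nat.pow_le_pow_right two_pos hk
    omega

lemma scaleMeasure_succ_eq_zero (hk : k ≤ K) {y : Fin d → ℤ}
    (hy : y ∉ box d (scaleSide ℓ K k)) : scaleMeasure d ℓ K (k + 1) y = 0 := by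
  rcases hk.lt_or_eq with hk | rfl
  · rw [scaleMeasure_of_le hk, mker_eq_zero]
    simpa [scaleSide, hk] using hy
  · rw [scaleMeasure_succ_self, m2ker_eq_zero]
    simpa [scaleSide] using hy

lemma sum_scaleMeasure_succ (hK : 2 ^ K ≤ ℓ) (hk : k ≤ K) :
    ∑ y ∈ box d (scaleSide ℓ K k), scaleMeasure d ℓ K (k + 1) y = 1 := by
  rcases hk.lt_or_eq with hk | rfl
  · rw [scaleMeasure_of_le hk, show scaleSide ℓ K k = 2 ^ (k + 1) from if_pos hk]
    exact sum_mker Nat.one_le_two_pow subset_rfl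
  · rw [scaleMeasure_succ_self, show scaleSide ℓ k k = 2 * ℓ - 1 from if_neg (lt_irrefl k)]
    exact sum_m2ker (Nat.one_le_two_pow.trans hK)

lemma scaleStep_eq_zero (hK : 2 ^ K ≤ ℓ) (hk : k ≤ K) {y : Fin d → ℤ}
    (hy : y ∉ box d (scaleSide ℓ K k)) : scaleStep d ℓ K k y = 0 := by
  rw [scaleStep, Pi.sub_apply, scaleMeasure_succ_eq_zero hk hy, scaleMeasure_of_le hk,
    mker_eq_zero fun h => hy (box_mono (pow_le_scaleSide hK hk) h), sub_zero]

lemma sum_scaleStep (hK : 2 ^ K ≤ ℓ) (hk : k ≤ K) :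
    ∑ y ∈ box d (scaleSide ℓ K k), scaleStep d ℓ K k y = 0 := by
  simp only [scaleStep, Pi.sub_apply]
  rw [sum_sub_distrib, sum_scaleMeasure_succ hK hk, scaleMeasure_of_le hk,
    sum_mker Nat.one_le_two_pow (box_mono (pow_le_scaleSide hK hk)), sub_self]

lemma scaleFlow_div (hK : 2 ^ K ≤ ℓ) (hk : k ≤ K) (x : Fin d → ℤ) :
    ∑ j, (scaleFlow d ℓ K k j x - scaleFlow d ℓ K k j (x - unitZ d j)) = scaleStep d ℓ K k x :=
  boxFlow_div _ (fun _ hy => scaleStep_eq_zero hK hk hy) (sum_scaleStep hK hk) x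

lemma scaleFlow_ne_zero {j : Fin d} {x : Fin d → ℤ} (h : scaleFlow d ℓ K k j x ≠ 0) :
    x ∈ box d (scaleSide ℓ K k) ∧ x + unitZ d j ∈ box d (scaleSide ℓ K k) :=
  boxFlow_ne_zero _ h

theorem multiscaleFlow_div (hK : 2 ^ K ≤ ℓ) (x : Fin d → ℤ) :
    ∑ j, (multiscaleFlow d ℓ K j x - multiscaleFlow d ℓ K j (x - unitZ d j))
      = (if x = 0 then 1 else 0) - m2ker d ℓ x := by
  simp only [multiscaleFlow, ← sum_sub_distrib]
  rw [sum_comm, sum_congr rfl fun k hk => scaleFlow_div hK (mem_range_succ_iff.1 hk) x]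
  simp only [scaleStep, Pi.sub_apply]
  rw [sum_range_sub', scaleMeasure_succ_self, scaleMeasure_of_le K.zero_le, pow_zero, mker_one]

lemma multiscaleFlow_ne_zero (hK : 2 ^ K ≤ ℓ) {j : Fin d} {x : Fin d → ℤ}
    (h : multiscaleFlow d ℓ K j x ≠ 0) :
    x ∈ box d (2 * ℓ - 1) ∧ x + unitZ d j ∈ box d (2 * ℓ - 1) := by
  obtain ⟨k, -, hk⟩ := exists_ne_zero_of_sum_ne_zero h
  exact (scaleFlow_ne_zero hk).imp (box_mono (scaleSide_le hK) ·) (box_mono (scaleSide_le hK) ·)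

lemma multiscaleFlow_one_zero : multiscaleFlow d 1 0 = 0 := by
  have : scaleStep d 1 0 0 = 0 := by
    rw [scaleStep, scaleMeasure_succ_self, scaleMeasure_of_le le_rfl, pow_zero, m2ker_one,
      sub_self]
  funext j x
  rw [multiscaleFlow, sum_range_one, scaleFlow, this, boxFlow_zero, Pi.zero_apply, Pi.zero_apply]

lemma scaleMeasure_nonneg (y : Fin d → ℤ) : 0 ≤ scaleMeasure d ℓ K k y := by
  unfold scaleMeasure
  split_ifs
  exacts [mker_nonneg _ y, m2ker_nonneg ℓ y]

lemma sum_abs_scaleStep_le (hK : 2 ^ K ≤ ℓ) (hk : k ≤ K) :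
    ∑ y ∈ box d (scaleSide ℓ K k), |scaleStep d ℓ K k y| ≤ 2 :=
  calc _ ≤ ∑ y ∈ box d (scaleSide ℓ K k), (scaleMeasure d ℓ K k y + scaleMeasure d ℓ K (k + 1) y) :=
        sum_le_sum fun y _ => (abs_sub _ _).trans_eq <| by
          rw [abs_of_nonneg (scaleMeasure_nonneg y), abs_of_nonneg (scaleMeasure_nonneg y)]
    _ = 2 := by
        rw [sum_add_distrib, sum_scaleMeasure_succ hK hk, scaleMeasure_of_le hk,
          sum_mker Nat.one_le_two_pow (box_mono (pow_le_scaleSide hK hk))]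
        norm_num

lemma abs_multiscaleFlow_zero_le (hℓ : 1 ≤ ℓ) (j : Fin d) (x : Fin d → ℤ) :
    |multiscaleFlow d ℓ 0 j x| ≤ 4 := by
  have hK : 2 ^ 0 ≤ ℓ := hℓ
  rw [multiscaleFlow, sum_range_one]
  calc _ ≤ 2 * ∑ y ∈ box d (scaleSide ℓ 0 0), |scaleStep d ℓ 0 0 y| :=
        abs_boxFlow_le_sum_abs _ (Nat.one_le_two_pow.trans (pow_le_scaleSide hK le_rfl)) j x
    _ ≤ 4 := by linarith [sum_abs_scaleStep_le (d := d) hK le_rfl]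

lemma scaleSide_le_pow (hℓK : ℓ < 2 ^ (K + 1)) (k : ℕ) : scaleSide ℓ K k ≤ 2 ^ (k + 2) := by
  unfold scaleSide
  split_ifs with h
  · exact Nat.pow_le_pow_right two_pos (k + 1).le_succ
  · have := Nat.pow_le_pow_right two_pos (show K + 1 ≤ k + 1 by omega)
    rw [pow_succ 2 (k + 1)]
    omega

lemma abs_scaleStep_le (hK : 2 ^ K ≤ ℓ) (hk : k ≤ K) (y : Fin d → ℤ) :
    |scaleStep d ℓ K k y| ≤ (((2 : ℝ) ^ k) ^ d)⁻¹ := by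
  have finer : ∀ s : ℕ, 2 ^ k ≤ s → ((s : ℝ) ^ d)⁻¹ ≤ (((2 : ℝ) ^ k) ^ d)⁻¹ := fun s hs =>
    inv_anti₀ (by positivity) (pow_le_pow_left₀ (by positivity) (by exact_mod_cast hs) d)
  have hμ : scaleMeasure d ℓ K k y ≤ (((2 : ℝ) ^ k) ^ d)⁻¹ := by
    rw [scaleMeasure_of_le hk]
    exact (mker_le _ y).trans (finer _ le_rfl)
  have hμ' : scaleMeasure d ℓ K (k + 1) y ≤ (((2 : ℝ) ^ k) ^ d)⁻¹ := by
    rcases hk.lt_or_eq with hk | rfl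
    · rw [scaleMeasure_of_le hk]
      exact (mker_le _ y).trans (finer _ (Nat.pow_le_pow_right two_pos k.le_succ))
    · rw [scaleMeasure_succ_self]
      exact (m2ker_le (Nat.one_le_two_pow.trans hK) y).trans (finer _ hK)
  exact abs_sub_le_of_nonneg_of_le (scaleMeasure_nonneg y) hμ (scaleMeasure_nonneg y) hμ'

lemma abs_scaleFlow_le (hd : 1 ≤ d) (hK : 2 ^ K ≤ ℓ) (hℓK : ℓ < 2 ^ (K + 1)) (hk : k ≤ K)
    (j : Fin d) (x : Fin d → ℤ) :
    |scaleFlow d ℓ K k j x| ≤ 8 * ((2 : ℝ) ^ (d - 1))⁻¹ ^ k :=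
  calc _ ≤ 2 * (((2 : ℝ) ^ k) ^ d)⁻¹ * scaleSide ℓ K k :=
        abs_boxFlow_le_mul _ (abs_scaleStep_le hK hk) j x
    _ ≤ 2 * (((2 : ℝ) ^ k) ^ d)⁻¹ * 2 ^ (k + 2) := by
        gcongr
        exact_mod_cast scaleSide_le_pow hℓK k
    _ = _ := by
        obtain ⟨e, rfl⟩ : ∃ e, d = e + 1 := ⟨d - 1, by omega⟩
        have hq : ((2 : ℝ) ^ e)⁻¹ ^ k = (((2 : ℝ) ^ k) ^ e)⁻¹ := by
          rw [inv_pow, ← pow_mul, ← pow_mul, mul_comm]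
        rw [Nat.add_sub_cancel, hq, pow_add (2 : ℝ) k 2]
        field_simp
        ring

lemma sum_abs_scaleFlow_le (hd : 1 ≤ d) (hK : 2 ^ K ≤ ℓ) (hℓK : ℓ < 2 ^ (K + 1)) (hk : k ≤ K)
    (j : Fin d) :
    ∑ x ∈ box d (2 * ℓ - 1), |scaleFlow d ℓ K k j x|
      ≤ (2 : ℝ) ^ ((k + 2) * d) * (8 * ((2 : ℝ) ^ (d - 1))⁻¹ ^ k) := by
  rw [← sum_subset (box_mono (scaleSide_le hK)) fun x _ hx => abs_eq_zero.2 <|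
    by_contra fun h => hx (scaleFlow_ne_zero h).1]
  calc _ ≤ ∑ x ∈ box d (scaleSide ℓ K k), 8 * ((2 : ℝ) ^ (d - 1))⁻¹ ^ k :=
        sum_le_sum fun x _ => abs_scaleFlow_le hd hK hℓK hk j x
    _ = (scaleSide ℓ K k : ℝ) ^ d * (8 * ((2 : ℝ) ^ (d - 1))⁻¹ ^ k) := by
        rw [sum_const, card_box, nsmul_eq_mul, Nat.cast_pow]
    _ ≤ _ := by
        rw [pow_mul]
        gcongr
        exact_mod_cast scaleSide_le_pow hℓK k

theorem sum_sq_multiscaleFlow_le (hd : 2 ≤ d) (hK : 2 ^ K ≤ ℓ) (hℓK : ℓ < 2 ^ (K + 1)) :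
    ∑ j, ∑ x ∈ box d (2 * ℓ - 1), multiscaleFlow d ℓ K j x ^ 2
      ≤ d * 2 ^ (2 * d + 8) * ∑ k ∈ range (K + 1), ((2 : ℝ) ^ (d - 2))⁻¹ ^ k := by
  set r : ℝ := ((2 : ℝ) ^ (d - 1))⁻¹
  have hscale : ∀ k, (2 : ℝ) ^ ((k + 2) * d) * (8 * r ^ k) * (8 * (2 * r ^ k))
      = 2 ^ (2 * d + 7) * ((2 : ℝ) ^ (d - 2))⁻¹ ^ k := fun k => by
    obtain ⟨e, rfl⟩ : ∃ e, d = e + 2 := ⟨d - 2, by omega⟩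
    have hr : r ^ k = (((2 : ℝ) ^ k) ^ (e + 1))⁻¹ := by
      rw [inv_pow, ← pow_mul, ← pow_mul, mul_comm]; rfl
    have hρ : ((2 : ℝ) ^ (e + 2 - 2))⁻¹ ^ k = (((2 : ℝ) ^ k) ^ e)⁻¹ := by
      rw [Nat.add_sub_cancel, inv_pow, ← pow_mul, ← pow_mul, mul_comm]
    rw [hr, hρ, add_mul, pow_add, pow_mul]
    field_simp
    ring
  have hj : ∀ j : Fin d, ∑ x ∈ box d (2 * ℓ - 1), multiscaleFlow d ℓ K j x ^ 2
      ≤ 2 ^ (2 * d + 8) * ∑ k ∈ range (K + 1), ((2 : ℝ) ^ (d - 2))⁻¹ ^ k := fun j => by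
    unfold multiscaleFlow
    calc _ ≤ 2 * ∑ k ∈ range (K + 1), (2 : ℝ) ^ ((k + 2) * d) * (8 * r ^ k)
            * ∑ k' ∈ Ico k (K + 1), 8 * r ^ k' :=
          sum_sq_sum_le _ _ _ _ _ (fun k => by positivity)
            (fun k hk => abs_scaleFlow_le (by omega) hK hℓK (by omega) j)
            (fun k hk => sum_abs_scaleFlow_le (by omega) hK hℓK (by omega) j)
      _ ≤ 2 * ∑ k ∈ range (K + 1),
            (2 : ℝ) ^ ((k + 2) * d) * (8 * r ^ k) * (8 * (2 * r ^ k)) := by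
          gcongr with k
          rw [← mul_sum]
          gcongr
          exact sum_Ico_geom_le (by positivity) (inv_two_pow_le_half (by omega)) k (K + 1)
      _ = _ := by
          simp_rw [hscale, ← mul_sum]
          ring
  calc _ ≤ ∑ _j : Fin d, 2 ^ (2 * d + 8) * ∑ k ∈ range (K + 1), ((2 : ℝ) ^ (d - 2))⁻¹ ^ k :=
        sum_le_sum fun j _ => hj j
    _ = _ := by
        rw [sum_const, card_univ, Fintype.card_fin, nsmul_eq_mul]
        ring

end Multiscale

section Transport

variable {d ℓ : ℕ}

def numScales (d ℓ : ℕ) : ℕ := if d = 1 then 0 else Nat.log 2 ℓ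

noncomputable def transportFlow (d ℓ : ℕ) : Fin d → (Fin d → ℤ) → ℝ :=
  multiscaleFlow d ℓ (numScales d ℓ)

lemma pow_numScales_le (hℓ : 1 ≤ ℓ) : 2 ^ numScales d ℓ ≤ ℓ := by
  unfold numScales
  split_ifs
  · exact hℓ
  · exact Nat.pow_log_le_self 2 (by omega)

lemma sum_sq_transportFlow_le_of_dim_eq_one (hℓ : 1 ≤ ℓ) :
    ∑ j, ∑ x ∈ box 1 (2 * ℓ - 1), transportFlow 1 ℓ j x ^ 2 ≤ 32 * ℓ :=
  calc _ ≤ ∑ _j : Fin 1, ∑ _x ∈ box 1 (2 * ℓ - 1), (4 : ℝ) ^ 2 :=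
        sum_le_sum fun j _ => sum_le_sum fun x _ => (sq_abs _).symm.trans_le
          (pow_le_pow_left₀ (abs_nonneg _) (abs_multiscaleFlow_zero_le hℓ j x) 2)
    _ ≤ 32 * ℓ := by
        have : ((2 * ℓ - 1 : ℕ) : ℝ) ≤ 2 * ℓ := by exact_mod_cast Nat.sub_le _ _
        simp only [sum_const, card_box, card_univ, Fintype.card_fin, one_smul, pow_one,
          nsmul_eq_mul]
        nlinarith

lemma natLog_two_add_one_le (hℓ : 2 ≤ ℓ) : (Nat.log 2 ℓ + 1 : ℝ) ≤ 3 * Real.log ℓ := by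
  have hK : (1 : ℝ) ≤ Nat.log 2 ℓ := by exact_mod_cast Nat.log_pos one_lt_two hℓ
  have hlog2 := Real.log_two_gt_d9
  have hlogb : (Nat.log 2 ℓ : ℝ) * Real.log 2 ≤ Real.log ℓ := by
    have := Real.natLog_le_logb ℓ 2
    rw [Real.logb, le_div_iff₀ (by positivity)] at this
    exact_mod_cast this
  nlinarith

lemma sum_sq_transportFlow_le_of_dim_eq_two (hℓ : 1 ≤ ℓ) :
    ∑ j, ∑ x ∈ box 2 (2 * ℓ - 1), transportFlow 2 ℓ j x ^ 2 ≤ 3 * 2 ^ 13 * Real.log ℓ := by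
  -- `log 1 = 0`: for `ℓ = 1` the flow has to vanish, which it does since `m^{(2)}_1 = δ₀`.
  rcases hℓ.eq_or_lt with rfl | hℓ
  · simp [transportFlow, numScales, multiscaleFlow_one_zero]
  calc _ ≤ ((2 : ℕ) : ℝ) * 2 ^ (2 * 2 + 8)
        * ∑ k ∈ range (Nat.log 2 ℓ + 1), ((2 : ℝ) ^ (2 - 2))⁻¹ ^ k :=
        sum_sq_multiscaleFlow_le le_rfl (Nat.pow_log_le_self 2 (by omega))
          (Nat.lt_pow_succ_log_self one_lt_two ℓ)
    _ = 2 ^ 13 * (Nat.log 2 ℓ + 1 : ℝ) := by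
        simp only [Nat.sub_self, pow_zero, inv_one, one_pow, sum_const, card_range,
          nsmul_eq_mul, mul_one]
        push_cast
        ring
    _ ≤ 2 ^ 13 * (3 * Real.log ℓ) := by gcongr; exact natLog_two_add_one_le hℓ
    _ = _ := by ring

lemma sum_sq_transportFlow_le_of_three_le_dim (hd : 3 ≤ d) (hℓ : 1 ≤ ℓ) :
    ∑ j, ∑ x ∈ box d (2 * ℓ - 1), transportFlow d ℓ j x ^ 2 ≤ d * 2 ^ (2 * d + 8) * 2 := by
  have hgeom := sum_Ico_geom_le (by positivity) (inv_two_pow_le_half (by omega : 1 ≤ d - 2)) 0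
    (Nat.log 2 ℓ + 1)
  rw [← range_eq_Ico, pow_zero, mul_one] at hgeom
  calc _ ≤ d * 2 ^ (2 * d + 8) * ∑ k ∈ range (Nat.log 2 ℓ + 1), ((2 : ℝ) ^ (d - 2))⁻¹ ^ k := by
        rw [transportFlow, numScales, if_neg (by omega)]
        exact sum_sq_multiscaleFlow_le (by omega) (Nat.pow_log_le_self 2 (by omega))
          (Nat.lt_pow_succ_log_self one_lt_two ℓ)
    _ ≤ _ := by gcongr

theorem exists_sum_sq_transportFlow_le (hd : 1 ≤ d) :
    ∃ C : ℝ, ∀ ℓ, 1 ≤ ℓ →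
      ∑ j, ∑ x ∈ box d (2 * ℓ - 1), transportFlow d ℓ j x ^ 2 ≤ C * gd d ℓ := by
  rcases (show d = 1 ∨ d = 2 ∨ 3 ≤ d by omega) with rfl | rfl | hd3
  · exact ⟨32, fun ℓ hℓ => sum_sq_transportFlow_le_of_dim_eq_one hℓ⟩
  · exact ⟨3 * 2 ^ 13, fun ℓ hℓ => sum_sq_transportFlow_le_of_dim_eq_two hℓ⟩
  · refine ⟨d * 2 ^ (2 * d + 8) * 2, fun ℓ hℓ => ?_⟩
    rw [show gd d ℓ = 1 from (if_neg (by omega)).trans (if_neg (by omega)), mul_one]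
    exact sum_sq_transportFlow_le_of_three_le_dim hd3 hℓ

end Transport

/-- existence of a nearest-neighbour flow connecting the Dirac measure
at the origin to `m^{(2)}_ℓ`, supported in `Λ_{2ℓ-1}`, whose squared ℓ² norm is
bounded by `C_d g_d(ℓ)`. -/
theorem flow_existence :
    ∀ d : ℕ, 1 ≤ d →
    ∃ C : ℝ, ∀ ℓ : ℕ, 1 ≤ ℓ →
    ∃ Φ : (Fin d → ℤ) → (Fin d → ℤ) → ℝ,
      (∀ x y, Φ x y = -Φ y x) ∧
      (∀ x y, (norm1 (y - x) ≠ 1 ∨ x ∉ box d (2 * ℓ - 1) ∨ y ∉ box d (2 * ℓ - 1)) →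
        Φ x y = 0) ∧
      (∀ x, (∑ j : Fin d, (Φ x (x + unitZ d j) + Φ x (x - unitZ d j)))
        = (if x = 0 then (1 : ℝ) else 0) - m2ker d ℓ x) ∧
      (∑ j : Fin d, ∑ x ∈ box d (2 * ℓ - 1), Φ x (x + unitZ d j) ^ 2) ≤ C * gd d ℓ := by
  intro d hd
  obtain ⟨C, hC⟩ := exists_sum_sq_transportFlow_le hd
  refine ⟨C, fun ℓ hℓ => ⟨bondFlow (transportFlow d ℓ), bondFlow_antisymm _,
    fun x y => bondFlow_eq_zero _ fun j x => multiscaleFlow_ne_zero (pow_numScales_le hℓ),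
    fun x => ?_, ?_⟩⟩
  · simp only [bondFlow_add_unitZ, bondFlow_sub_unitZ, ← sub_eq_add_neg]
    exact multiscaleFlow_div (pow_numScales_le hℓ) x
  · simpa only [bondFlow_add_unitZ] using hC ℓ hℓ
end

section
/- Fix a cylinder function f₀ : {0,1}^{ℤ^d} → ℝ and a function F : T^d_n → ℝ. There exist finite constants 0 < c₀ < C₀ < ∞, depending only on f₀, such that log E_{ν^n_ρ}[ exp( a ( n^{−d/2} Σ_{x∈T^d_n} ( f₀(τ_x η) − ~f₀(ρ) ) F_x )² ) ] ≤ C₀ a ‖F‖²_∞ for all 0 < a < c₀ / ‖F‖²_∞, where ‖F‖_∞ = max_x |F(x)|. -/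
/-!
Write `X = n^{-d/2} ∑ₓ (f₀(τₓ η) - ~f₀(ρ)) Fₓ`. Because the support of `f₀` fits in a cube of
side `n`, each `f₀ ∘ τₓ` reads distinct sites, so `E X = 0`; and changing one spin affects at most
`|supp f₀|` summands, so `X` has bounded differences `n^{-d/2} K ‖F‖_∞`. Integrating out the spins
one at a time, with the two-point bound `q eᵘ + (1 - q) eᵛ ≤ e^{qu + (1-q)v} e^{(u-v)²}` at each
step, gives the sub-Gaussian bound `E e^{tX} ≤ e^{t²κ²}` with `κ = K ‖F‖_∞` (the `n^d` sites cancel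
the normalisation). Chernoff-type moment bounds then give `E X^{2k} ≤ 2 k! (6κ²)^k`, and summing
the series of `e^{aX²}` yields `E e^{aX²} ≤ 1 + 24 a κ²` when `12 a κ² ≤ 1`; finally
`log x ≤ x - 1`.
-/

open Finset

section BernoulliProduct

variable {ι : Type*} [Fintype ι] {ρ : ℝ}

noncomputable def bernProb (ρ : ℝ) (η : ι → Bool) : ℝ := ∏ i, if η i then ρ else 1 - ρ

theorem bernProb_nonneg (h0 : 0 ≤ ρ) (h1 : ρ ≤ 1) (η : ι → Bool) : 0 ≤ bernProb ρ η :=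
  Finset.prod_nonneg fun i _ => by split_ifs <;> linarith

theorem bernProb_sumElim {κ : Type*} [Fintype κ] (ρ : ℝ) (σ : ι → Bool) (τ : κ → Bool) :
    bernProb ρ (Sum.elim σ τ) = bernProb ρ σ * bernProb ρ τ :=
  Fintype.prod_sum_type _

variable [DecidableEq ι]

-- On `ι = Torus d n` this is `expect d n ρ` definitionally.
noncomputable def bernExpect (ρ : ℝ) (f : (ι → Bool) → ℝ) : ℝ := ∑ η, bernProb ρ η * f η

theorem sum_bernProb (ρ : ℝ) : ∑ η : ι → Bool, bernProb ρ η = 1 := by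
  simp [bernProb, ← Fintype.prod_sum (fun (_ : ι) (b : Bool) => if b then ρ else 1 - ρ)]

theorem bernExpect_const (ρ c : ℝ) : bernExpect (ι := ι) ρ (fun _ => c) = c := by
  rw [bernExpect, ← Finset.sum_mul, sum_bernProb, one_mul]

theorem bernExpect_mono (h0 : 0 ≤ ρ) (h1 : ρ ≤ 1) {f g : (ι → Bool) → ℝ}
    (h : ∀ η, f η ≤ g η) : bernExpect ρ f ≤ bernExpect ρ g :=
  Finset.sum_le_sum fun η _ => mul_le_mul_of_nonneg_left (h η) (bernProb_nonneg h0 h1 η)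

theorem bernExpect_const_mul (ρ c : ℝ) (f : (ι → Bool) → ℝ) :
    bernExpect ρ (fun η => c * f η) = c * bernExpect ρ f := by
  simp only [bernExpect, Finset.mul_sum, mul_left_comm]

theorem bernExpect_add (ρ : ℝ) (f g : (ι → Bool) → ℝ) :
    bernExpect ρ (fun η => f η + g η) = bernExpect ρ f + bernExpect ρ g := by
  simp only [bernExpect, mul_add, Finset.sum_add_distrib]

theorem bernExpect_sub_const (ρ c : ℝ) (f : (ι → Bool) → ℝ) :
    bernExpect ρ (fun η => f η - c) = bernExpect ρ f - c := by
  simp only [bernExpect, mul_sub, Finset.sum_sub_distrib, ← Finset.sum_mul, sum_bernProb, one_mul]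

theorem bernExpect_sum {κ : Type*} (ρ : ℝ) (s : Finset κ) (f : κ → (ι → Bool) → ℝ) :
    bernExpect ρ (fun η => ∑ x ∈ s, f x η) = ∑ x ∈ s, bernExpect ρ (f x) := by
  simp only [bernExpect, Finset.mul_sum]
  exact Finset.sum_comm

theorem bernExpect_comp_equiv {κ : Type*} [Fintype κ] [DecidableEq κ] (ρ : ℝ) (e : ι ≃ κ)
    (g : (κ → Bool) → ℝ) : bernExpect ρ (fun η => g (η ∘ e.symm)) = bernExpect ρ g := by
  rw [bernExpect, bernExpect, ← (e.arrowCongr (Equiv.refl Bool)).symm.sum_comp]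
  refine Fintype.sum_congr _ _ fun η => ?_
  simp [bernProb, Equiv.arrowCongr, ← e.symm.prod_comp, Function.comp_assoc]

theorem bernExpect_comp_inl {κ : Type*} [Fintype κ] [DecidableEq κ] (ρ : ℝ)
    (h : (ι → Bool) → ℝ) :
    bernExpect (ι := ι ⊕ κ) ρ (fun η => h (η ∘ Sum.inl)) = bernExpect ρ h := by
  rw [bernExpect, ← (Equiv.sumArrowEquivProdArrow ι κ Bool).symm.sum_comp,
    Fintype.sum_prod_type]
  refine Fintype.sum_congr _ _ fun σ => ?_
  change ∑ τ, bernProb ρ (Sum.elim σ τ) * h (Sum.elim σ τ ∘ Sum.inl) = _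
  simp only [bernProb_sumElim, Sum.elim_comp_inl, mul_right_comm (bernProb ρ σ)]
  rw [← Finset.mul_sum, sum_bernProb, mul_one]

theorem bernExpect_comp_of_injective {α : Type*} [Fintype α] [DecidableEq α] (ρ : ℝ)
    {θ : α → ι} (hθ : Function.Injective θ) (h : (α → Bool) → ℝ) :
    bernExpect ρ (fun η => h (η ∘ θ)) = bernExpect ρ h := by
  classical
  let E : α ⊕ {i // i ∉ Set.range θ} ≃ ι :=
    ((Equiv.ofInjective θ hθ).sumCongr (Equiv.refl _)).trans (Equiv.sumCompl _)
  have hθE : θ = E ∘ Sum.inl := rfl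
  rw [hθE, ← bernExpect_comp_inl (κ := {i // i ∉ Set.range θ}) ρ h,
    ← bernExpect_comp_equiv ρ E.symm]
  rfl

end BernoulliProduct

theorem Real.exp_le_add_exp_sq (x : ℝ) : Real.exp x ≤ x + Real.exp (x ^ 2) := by
  have hsq := Real.add_one_le_exp (x ^ 2)
  rcases le_or_gt |x| 1 with hx | hx
  · have := (abs_le.1 (Real.abs_exp_sub_one_sub_id_le hx)).2
    linarith
  · rcases le_or_gt 0 x with hx0 | hx0
    · rw [abs_of_nonneg hx0] at hx
      have := Real.exp_le_exp.2 (show x ≤ x ^ 2 by nlinarith)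
      linarith
    · rw [abs_of_neg hx0] at hx
      have := Real.exp_le_one_iff.2 hx0.le
      nlinarith

theorem Real.convex_comb_exp_le {q : ℝ} (h0 : 0 ≤ q) (h1 : q ≤ 1) (u v : ℝ) :
    q * Real.exp u + (1 - q) * Real.exp v ≤
      Real.exp (q * u + (1 - q) * v) * Real.exp ((u - v) ^ 2) := by
  set m := q * u + (1 - q) * v
  set A := (1 - q) * (u - v)
  set B := -(q * (u - v))
  have hexp_le {w : ℝ} (hw : w ^ 2 ≤ (u - v) ^ 2) : Real.exp w ≤ w + Real.exp ((u - v) ^ 2) :=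
    (Real.exp_le_add_exp_sq w).trans (by gcongr)
  have hA : Real.exp A ≤ A + Real.exp ((u - v) ^ 2) := hexp_le (by
    have : (1 - q) ^ 2 ≤ 1 := by nlinarith
    simpa [A, mul_pow] using mul_le_of_le_one_left (sq_nonneg (u - v)) this)
  have hB : Real.exp B ≤ B + Real.exp ((u - v) ^ 2) := hexp_le (by
    have : q ^ 2 ≤ 1 := by nlinarith
    simpa [B, mul_pow] using mul_le_of_le_one_left (sq_nonneg (u - v)) this)
  have hu : Real.exp u = Real.exp m * Real.exp A := by rw [← Real.exp_add]; congr 1; ring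
  have hv : Real.exp v = Real.exp m * Real.exp B := by rw [← Real.exp_add]; congr 1; ring
  -- the linear terms `q * A + (1 - q) * B` cancel
  rw [hu, hv]
  have := mul_le_mul_of_nonneg_left hA h0
  have := mul_le_mul_of_nonneg_left hB (sub_nonneg.2 h1)
  have hm := Real.exp_pos m
  nlinarith

section Tensorization

variable {ι : Type*} [DecidableEq ι] {ρ : ℝ}

noncomputable def avgAt (ρ : ℝ) (y : ι) (f : (ι → Bool) → ℝ) (η : ι → Bool) : ℝ :=
  ρ * f (Function.update η y true) + (1 - ρ) * f (Function.update η y false)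

theorem DependsOn.avgAt {f : (ι → Bool) → ℝ} {y : ι} {A : Set ι}
    (hf : DependsOn f (insert y A)) : DependsOn (avgAt ρ y f) A := by
  intro η ζ h
  have hupd (b : Bool) : f (Function.update η y b) = f (Function.update ζ y b) := by
    refine hf fun i hi => ?_
    rcases eq_or_ne i y with rfl | hiy
    · simp
    · simp [Function.update_of_ne hiy, h i (hi.resolve_left hiy)]
  simp only [_root_.avgAt, hupd]

theorem abs_avgAt_update_sub_le (h0 : 0 ≤ ρ) (h1 : ρ ≤ 1) {f : (ι → Bool) → ℝ} {y z : ι}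
    (hzy : z ≠ y) {c : ℝ}
    (hc : ∀ η, |f (Function.update η z true) - f (Function.update η z false)| ≤ c)
    (η : ι → Bool) :
    |avgAt ρ y f (Function.update η z true) - avgAt ρ y f (Function.update η z false)| ≤ c := by
  have key : avgAt ρ y f (Function.update η z true) - avgAt ρ y f (Function.update η z false)
      = ρ * (f (Function.update (Function.update η y true) z true)
          - f (Function.update (Function.update η y true) z false))
        + (1 - ρ) * (f (Function.update (Function.update η y false) z true)
          - f (Function.update (Function.update η y false) z false)) := by
    simp only [avgAt, Function.update_comm hzy]
    ring
  rw [key]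
  calc _ ≤ ρ * c + (1 - ρ) * c := by
        refine (abs_add_le _ _).trans ?_
        rw [abs_mul, abs_mul, abs_of_nonneg h0, abs_of_nonneg (sub_nonneg.2 h1)]
        gcongr
        · exact hc _
        · exact hc _
    _ = c := by ring

theorem update_funSplitAt_symm (y : ι) (b b' : Bool) (ζ : {i // i ≠ y} → Bool) :
    Function.update ((Equiv.funSplitAt y Bool).symm (b, ζ)) y b'
      = (Equiv.funSplitAt y Bool).symm (b', ζ) := by
  ext i
  by_cases h : i = y <;> simp [Equiv.funSplitAt, h]

variable [Fintype ι]

theorem bernProb_funSplitAt_symm (ρ : ℝ) (y : ι) (b : Bool) (ζ : {i // i ≠ y} → Bool) :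
    bernProb ρ ((Equiv.funSplitAt y Bool).symm (b, ζ))
      = (if b then ρ else 1 - ρ) * bernProb ρ ζ := by
  rw [bernProb, Fintype.prod_eq_mul_prod_subtype_ne _ y]
  congr 1
  · simp [Equiv.funSplitAt]
  · exact Fintype.prod_congr _ _ fun j => by simp [Equiv.funSplitAt, j.2]

theorem bernExpect_avgAt (ρ : ℝ) (y : ι) (f : (ι → Bool) → ℝ) :
    bernExpect ρ (avgAt ρ y f) = bernExpect ρ f := by
  simp only [bernExpect, ← (Equiv.funSplitAt y Bool).symm.sum_comp, Fintype.sum_prod_type,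
    Fintype.sum_bool, avgAt, update_funSplitAt_symm, bernProb_funSplitAt_symm,
    ← Finset.sum_add_distrib]
  refine Fintype.sum_congr _ _ fun ζ => ?_
  simp only [if_true, Bool.false_eq_true, if_false]
  ring

theorem bernExpect_exp_le_of_dependsOn (h0 : 0 ≤ ρ) (h1 : ρ ≤ 1) (A : Finset ι)
    {f : (ι → Bool) → ℝ} (hf : DependsOn f A) {c : ι → ℝ}
    (hc : ∀ y ∈ A, ∀ η, |f (Function.update η y true) - f (Function.update η y false)| ≤ c y) :
    bernExpect ρ (fun η => Real.exp (f η)) ≤ Real.exp (bernExpect ρ f + ∑ y ∈ A, c y ^ 2) := by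
  induction A using Finset.induction_on generalizing f with
  | empty =>
    rw [coe_empty] at hf
    have hconst : f = fun _ => f default := funext fun η => hf.empty η default
    rw [hconst, bernExpect_const, bernExpect_const]
    simp
  | @insert y A hy ih =>
    have hstep (η : ι → Bool) : avgAt ρ y (fun η => Real.exp (f η)) η
        ≤ Real.exp (avgAt ρ y f η + c y ^ 2) := by
      have hcy := abs_le.1 (hc y (mem_insert_self y A) η)
      rw [Real.exp_add]
      refine (Real.convex_comb_exp_le h0 h1 _ _).trans ?_
      gcongr _ * Real.exp ?_
      exact sq_le_sq' hcy.1 hcy.2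
    have ih' := ih (f := avgAt ρ y f) (DependsOn.avgAt (by simpa using hf))
      fun z hz => abs_avgAt_update_sub_le h0 h1 (ne_of_mem_of_not_mem hz hy)
        (hc z (mem_insert_of_mem hz))
    calc bernExpect ρ (fun η => Real.exp (f η))
        = bernExpect ρ (avgAt ρ y fun η => Real.exp (f η)) := (bernExpect_avgAt ρ y _).symm
      _ ≤ bernExpect ρ (fun η => Real.exp (c y ^ 2) * Real.exp (avgAt ρ y f η)) :=
          bernExpect_mono h0 h1 fun η => (hstep η).trans_eq (by rw [Real.exp_add, mul_comm])
      _ ≤ Real.exp (c y ^ 2) * Real.exp (bernExpect ρ (avgAt ρ y f) + ∑ z ∈ A, c z ^ 2) := by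
          rw [bernExpect_const_mul]
          gcongr
      _ = Real.exp (bernExpect ρ f + ∑ z ∈ insert y A, c z ^ 2) := by
          rw [bernExpect_avgAt, sum_insert hy, ← Real.exp_add]
          ring_nf

end Tensorization

open Nat in
theorem Real.pow_two_mul_le_mul_exp_add_exp {t : ℝ} (ht : 0 < t) (x : ℝ) (k : ℕ) :
    x ^ (2 * k) ≤ (2 * k)! / t ^ (2 * k) * (Real.exp (t * x) + Real.exp (-t * x)) := by
  have hexp : Real.exp (t * |x|) ≤ Real.exp (t * x) + Real.exp (-t * x) := by
    rcases abs_cases x with ⟨hx, -⟩ | ⟨hx, -⟩ <;> rw [hx]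
    · linarith [Real.exp_pos (-t * x)]
    · rw [show t * -x = -t * x by ring]
      linarith [Real.exp_pos (t * x)]
  have hpow := Real.pow_div_factorial_le_exp (t * |x|) (by positivity) (2 * k)
  rw [mul_pow, (even_two_mul k).pow_abs, div_le_iff₀ (by positivity : (0 : ℝ) < (2 * k)!)] at hpow
  rw [div_mul_eq_mul_div, le_div_iff₀ (by positivity)]
  nlinarith [(by positivity : (0 : ℝ) < (2 * k)!)]

section SubgaussianMoments

variable {ι : Type*} [Fintype ι] [DecidableEq ι] {ρ : ℝ}

open Nat in
theorem bernExpect_pow_two_mul_le_of_mgf_le (h0 : 0 ≤ ρ) (h1 : ρ ≤ 1) {X : (ι → Bool) → ℝ}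
    {κ : ℝ} (hκ : 0 < κ)
    (hmgf : ∀ t, bernExpect ρ (fun η => Real.exp (t * X η)) ≤ Real.exp (t ^ 2 * κ ^ 2))
    {k : ℕ} (hk : k ≠ 0) :
    bernExpect ρ (fun η => X η ^ (2 * k)) ≤ 2 * k ! * (6 * κ ^ 2) ^ k := by
  have hk0 : (0 : ℝ) < k := by positivity
  -- the Chernoff parameter that balances `t ^ (2 * k)` against `exp (t ^ 2 * κ ^ 2)`
  set t := Real.sqrt k / κ
  have ht : 0 < t := by positivity
  have htκ : t ^ 2 * κ ^ 2 = k := by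
    rw [div_pow, Real.sq_sqrt hk0.le, div_mul_cancel₀ _ (by positivity)]
  have hmom : bernExpect ρ (fun η => X η ^ (2 * k))
      ≤ (2 * k)! / t ^ (2 * k) * (2 * Real.exp k) := by
    refine (bernExpect_mono h0 h1 fun η =>
      Real.pow_two_mul_le_mul_exp_add_exp ht (X η) k).trans ?_
    rw [bernExpect_const_mul, bernExpect_add, ← htκ]
    gcongr
    have := hmgf (-t)
    rw [neg_sq] at this
    linarith [hmgf t]
  have hfact : ((2 * k)! : ℝ) ≤ (2 * k) ^ k * k ! := by
    exact_mod_cast Nat.factorial_two_mul_le k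
  have he : Real.exp k ≤ 3 ^ k := by
    rw [← Real.exp_one_pow]
    gcongr
    exact Real.exp_one_lt_three.le
  have htk : t ^ (2 * k) = (k / κ ^ 2) ^ k := by
    rw [pow_mul, ← htκ, mul_div_cancel_right₀ _ (by positivity)]
  refine hmom.trans ?_
  rw [htk]
  calc (2 * k)! / (k / κ ^ 2) ^ k * (2 * Real.exp k)
      ≤ (2 * k) ^ k * k ! / (k / κ ^ 2) ^ k * (2 * 3 ^ k) := by gcongr
    _ = 2 * k ! * (6 * κ ^ 2) ^ k := by
      rw [div_pow, mul_pow, mul_pow, show (6 : ℝ) ^ k = 2 ^ k * 3 ^ k by rw [← mul_pow]; norm_num]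
      field_simp

open Nat in
theorem hasSum_bernExpect_exp_mul_sq (ρ a : ℝ) (X : (ι → Bool) → ℝ) :
    HasSum (fun k => a ^ k / k ! * bernExpect ρ (fun η => X η ^ (2 * k)))
      (bernExpect ρ (fun η => Real.exp (a * X η ^ 2))) := by
  have h := hasSum_sum fun η (_ : η ∈ Finset.univ) =>
    (NormedSpace.expSeries_div_hasSum_exp (a * X η ^ 2)).mul_left (bernProb ρ η)
  simp only [← Real.exp_eq_exp_ℝ] at h
  have hterm (k : ℕ) : a ^ k / k ! * bernExpect ρ (fun η => X η ^ (2 * k))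
      = ∑ η, bernProb ρ η * ((a * X η ^ 2) ^ k / k !) := by
    simp only [bernExpect, Finset.mul_sum, mul_pow, pow_mul]
    exact Fintype.sum_congr _ _ fun η => by ring
  simp only [hterm]
  exact h

open Nat in
theorem bernExpect_exp_mul_sq_le_of_mgf_le (h0 : 0 ≤ ρ) (h1 : ρ ≤ 1) {X : (ι → Bool) → ℝ}
    {κ : ℝ} (hκ : 0 < κ)
    (hmgf : ∀ t, bernExpect ρ (fun η => Real.exp (t * X η)) ≤ Real.exp (t ^ 2 * κ ^ 2))
    {a : ℝ} (ha : 0 ≤ a) (haκ : 12 * a * κ ^ 2 ≤ 1) :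
    bernExpect ρ (fun η => Real.exp (a * X η ^ 2)) ≤ 1 + 24 * a * κ ^ 2 := by
  set β := 6 * a * κ ^ 2 with hβ
  have hβ0 : 0 ≤ β := by positivity
  have hβ1 : β ≤ 1 / 2 := by linarith
  have hterm (k : ℕ) : a ^ (k + 1) / (k + 1)! * bernExpect ρ (fun η => X η ^ (2 * (k + 1)))
      ≤ 2 * β * β ^ k := by
    calc _ ≤ a ^ (k + 1) / (k + 1)! * (2 * (k + 1)! * (6 * κ ^ 2) ^ (k + 1)) := by
          gcongr
          exact bernExpect_pow_two_mul_le_of_mgf_le h0 h1 hκ hmgf k.succ_ne_zero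
      _ = 2 * β * β ^ k := by
          rw [hβ]
          field_simp
          ring
  have hseries := (hasSum_nat_add_iff' 1).2 (hasSum_bernExpect_exp_mul_sq ρ a X)
  simp only [Finset.range_one, Finset.sum_singleton, pow_zero, mul_zero, factorial_zero,
    cast_one, div_one, one_mul, bernExpect_const] at hseries
  have htail := hasSum_le hterm hseries
    ((hasSum_geometric_of_lt_one hβ0 (by linarith)).mul_left (2 * β))
  have : 2 * β * (1 - β)⁻¹ ≤ 4 * β := by
    rw [← div_eq_mul_inv, div_le_iff₀ (by linarith)]
    nlinarith
  linarith

end SubgaussianMoments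

namespace CylFun

variable {d : ℕ} (f : CylFun d)

noncomputable def onSupp (σ : f.supp → Bool) : ℝ :=
  f.toFun fun z => if hz : z ∈ f.supp then σ ⟨z, hz⟩ else false

theorem tilde_eq_bernExpect (ρ : ℝ) : f.tilde ρ = bernExpect ρ f.onSupp := rfl

theorem toFun_eq_onSupp (ξ : ZCfg d) : f.toFun ξ = f.onSupp fun a => ξ a :=
  f.cyl _ _ fun z hz => by simp [hz]

noncomputable def bound : ℝ := ∑ σ, |f.onSupp σ|

theorem bound_nonneg : 0 ≤ f.bound := Finset.sum_nonneg fun _ _ => abs_nonneg _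

theorem abs_toFun_le_bound (ξ : ZCfg d) : |f.toFun ξ| ≤ f.bound := by
  rw [toFun_eq_onSupp]
  exact Finset.single_le_sum (f := fun σ => |f.onSupp σ|) (fun _ _ => abs_nonneg _)
    (Finset.mem_univ _)

end CylFun

section Torus

variable {d n : ℕ}

theorem FitsCube.injective_add_toTorus {S : Finset (Fin d → ℤ)} (hS : FitsCube d S n)
    (x : Torus d n) : Function.Injective fun z : S => x + toTorus (n := n) z := by
  obtain ⟨a, ha⟩ := hS
  intro z w hzw
  ext i
  have hdvd : (n : ℤ) ∣ w.1 i - z.1 i :=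
    (ZMod.intCast_eq_intCast_iff_dvd_sub _ _ _).1 (congrFun (add_left_cancel hzw) i)
  have hz := ha z z.2 i
  have hw := ha w w.2 i
  have := Int.eq_zero_of_abs_lt_dvd hdvd (abs_lt.2 ⟨by omega, by omega⟩)
  omega

theorem bernExpect_cylAt [NeZero n] {f : CylFun d} (hf : FitsCube d f.supp n) (ρ : ℝ)
    (x : Torus d n) : bernExpect ρ (cylAt f x) = f.tilde ρ := by
  rw [f.tilde_eq_bernExpect, ← bernExpect_comp_of_injective ρ (hf.injective_add_toTorus x)]
  exact congrArg _ (funext fun η => f.toFun_eq_onSupp _)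

theorem cylAt_update_of_notMem (f : CylFun d) {x y : Torus d n}
    (hx : x ∉ f.supp.image fun z => y - toTorus z) (η : Cfg d n) (b : Bool) :
    cylAt f x (Function.update η y b) = cylAt f x η :=
  f.cyl _ _ fun z hz => Function.update_of_ne
    (fun h => hx (Finset.mem_image.2 ⟨z, hz, by rw [← h]; exact add_sub_cancel_right x _⟩)) _ _

theorem abs_cylAt_le_bound (f : CylFun d) (x : Torus d n) (η : Cfg d n) :
    |cylAt f x η| ≤ f.bound :=
  f.abs_toFun_le_bound _

theorem abs_le_supNorm [NeZero n] (F : Torus d n → ℝ) (x : Torus d n) : |F x| ≤ supNorm F :=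
  le_ciSup (f := fun x => |F x|) (Set.finite_range _).bddAbove x

theorem supNorm_nonneg [NeZero n] (F : Torus d n → ℝ) : 0 ≤ supNorm F :=
  (abs_nonneg _).trans (abs_le_supNorm F 0)

end Torus

section FluctuationField

variable {d n : ℕ} [NeZero n]

noncomputable def fluctuationField (f : CylFun d) (F : Torus d n → ℝ) (ρ : ℝ) (η : Cfg d n) :
    ℝ :=
  (Real.sqrt ((n : ℝ) ^ d))⁻¹ * ∑ x : Torus d n, (cylAt f x η - f.tilde ρ) * F x

theorem bernExpect_fluctuationField {f : CylFun d} (hf : FitsCube d f.supp n)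
    (F : Torus d n → ℝ) (ρ : ℝ) : bernExpect ρ (fluctuationField f F ρ) = 0 := by
  unfold fluctuationField
  simp only [bernExpect_const_mul, bernExpect_sum, mul_comm _ (F _), bernExpect_const_mul,
    bernExpect_sub_const, bernExpect_cylAt hf, sub_self, mul_zero, Finset.sum_const_zero]

theorem abs_fluctuationField_update_sub_le (f : CylFun d) (F : Torus d n → ℝ) (ρ : ℝ)
    (y : Torus d n) (η : Cfg d n) :
    |fluctuationField f F ρ (Function.update η y true)
        - fluctuationField f F ρ (Function.update η y false)|
      ≤ (Real.sqrt ((n : ℝ) ^ d))⁻¹ * (2 * f.bound * #f.supp * supNorm F) := by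
  set T := f.supp.image fun z => y - toTorus (n := n) z
  have hsub : ∑ x, ((cylAt f x (Function.update η y true) - f.tilde ρ) * F x
        - (cylAt f x (Function.update η y false) - f.tilde ρ) * F x)
      = ∑ x ∈ T, (cylAt f x (Function.update η y true)
        - cylAt f x (Function.update η y false)) * F x := by
    refine (Finset.sum_subset (Finset.subset_univ T) fun x _ hx => ?_).symm.trans
      (Finset.sum_congr rfl fun x _ => by ring)
    simp [cylAt_update_of_notMem f hx]
  have hterm (x : Torus d n) : |(cylAt f x (Function.update η y true)
      - cylAt f x (Function.update η y false)) * F x| ≤ 2 * f.bound * supNorm F := by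
    have h₁ := abs_cylAt_le_bound f x (Function.update η y true)
    have h₂ := abs_cylAt_le_bound f x (Function.update η y false)
    rw [abs_mul]
    exact mul_le_mul ((abs_sub _ _).trans (by linarith)) (abs_le_supNorm F x) (abs_nonneg _)
      (by linarith [f.bound_nonneg])
  rw [fluctuationField, fluctuationField, ← mul_sub, ← Finset.sum_sub_distrib, hsub, abs_mul,
    abs_of_nonneg (by positivity)]
  gcongr
  calc _ ≤ ∑ x ∈ T, 2 * f.bound * supNorm F := (Finset.abs_sum_le_sum_abs _ _).trans
        (Finset.sum_le_sum fun x _ => hterm x)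
    _ ≤ #f.supp * (2 * f.bound * supNorm F) := by
      rw [Finset.sum_const, nsmul_eq_mul]
      have := f.bound_nonneg
      have := supNorm_nonneg F
      gcongr
      exact_mod_cast Finset.card_image_le
    _ = _ := by ring

theorem bernExpect_exp_mul_fluctuationField_le {ρ : ℝ} (h0 : 0 ≤ ρ) (h1 : ρ ≤ 1)
    {f : CylFun d} (hf : FitsCube d f.supp n) (F : Torus d n → ℝ) {κ : ℝ}
    (hκ : 2 * f.bound * #f.supp * supNorm F ≤ κ) (t : ℝ) :
    bernExpect ρ (fun η => Real.exp (t * fluctuationField f F ρ η))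
      ≤ Real.exp (t ^ 2 * κ ^ 2) := by
  set r := (Real.sqrt ((n : ℝ) ^ d))⁻¹
  have hr : r ^ 2 * Fintype.card (Torus d n) = 1 := by
    simp [r, ZMod.card]
  refine (bernExpect_exp_le_of_dependsOn h0 h1 univ (by simpa using dependsOn_univ _)
    (c := fun _ => |t| * (r * κ)) fun y _ η => ?_).trans_eq ?_
  · rw [← mul_sub, abs_mul]
    gcongr
    exact (abs_fluctuationField_update_sub_le f F ρ y η).trans (by gcongr)
  · rw [bernExpect_const_mul, bernExpect_fluctuationField hf, sum_const, card_univ, nsmul_eq_mul,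
      mul_pow, mul_pow, sq_abs]
    congr 1
    linear_combination (t ^ 2 * κ ^ 2) * hr

end FluctuationField

/-- exponential moment bound (Corollary l27):
`log E_{ν^n_ρ}[exp(a (n^{-d/2} Σ_x (f₀(τ_x η) - ~f₀(ρ)) F_x)²)] ≤ C₀ a ‖F‖²_∞`
for `0 < a < c₀/‖F‖²_∞`, with constants `0 < c₀ < C₀ < ∞` depending only on `f₀`. -/
theorem exp_square_moment_bound :
    ∀ (d : ℕ) (f₀ : CylFun d),
    ∃ c₀ C₀ : ℝ, 0 < c₀ ∧ c₀ < C₀ ∧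
      ∀ (n : ℕ) [NeZero n], ∀ ρ : ℝ, 0 < ρ → ρ < 1 →
        FitsCube d f₀.supp n →
        ∀ F : Torus d n → ℝ, ∀ a : ℝ, 0 < a → a < c₀ / supNorm F ^ 2 →
          Real.log (expect d n ρ (fun η => Real.exp (a *
            ((Real.sqrt ((n : ℝ) ^ d))⁻¹ *
              ∑ x : Torus d n, (cylAt f₀ x η - f₀.tilde ρ) * F x) ^ 2)))
            ≤ C₀ * a * supNorm F ^ 2 := by
  intro d f₀
  set K : ℝ := 2 * (f₀.bound + 1) * (#f₀.supp + 1)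
  have hK : 2 ≤ K := by nlinarith [f₀.bound_nonneg, (#f₀.supp).cast_nonneg (α := ℝ)]
  have hc₀ : (12 * K ^ 2)⁻¹ ≤ 1 := inv_le_one_of_one_le₀ (by nlinarith)
  refine ⟨(12 * K ^ 2)⁻¹, 24 * K ^ 2, by positivity, by nlinarith, ?_⟩
  intro n _ ρ hρ0 hρ1 hf F a ha haF
  have hF : 0 < supNorm F := (supNorm_nonneg F).lt_of_ne' fun h => by
    simp [h] at haF
    linarith
  have hκ : 2 * f₀.bound * #f₀.supp * supNorm F ≤ K * supNorm F := by
    gcongr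
    nlinarith [f₀.bound_nonneg, (#f₀.supp).cast_nonneg (α := ℝ)]
  have haK : 12 * a * (K * supNorm F) ^ 2 ≤ 1 :=
    calc _ = 12 * K ^ 2 * (a * supNorm F ^ 2) := by ring
      _ ≤ 12 * K ^ 2 * (12 * K ^ 2)⁻¹ := by gcongr; exact ((lt_div_iff₀ (by positivity)).1 haF).le
      _ = 1 := mul_inv_cancel₀ (by positivity)
  have hE := bernExpect_exp_mul_sq_le_of_mgf_le hρ0.le hρ1.le (by positivity)
    (bernExpect_exp_mul_fluctuationField_le hρ0.le hρ1.le hf F hκ) ha.le haK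
  have hE1 : 1 ≤ bernExpect ρ fun η => Real.exp (a * fluctuationField f₀ F ρ η ^ 2) :=
    (bernExpect_const ρ 1).symm.le.trans
      (bernExpect_mono hρ0.le hρ1.le fun η => Real.one_le_exp (by positivity))
  calc _ ≤ (bernExpect ρ fun η => Real.exp (a * fluctuationField f₀ F ρ η ^ 2)) - 1 :=
        Real.log_le_sub_one_of_pos (by linarith)
    _ ≤ 24 * K ^ 2 * a * supNorm F ^ 2 := by linarith
end
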